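/- arXiv:1203.4545 — 3 statements merged into one kernel-verified Lean document; each statement's English description precedes it below -/
import Mathlib

section
/- Smooth periodic solutions of the decoupled two-scale Euler system ∂_t u₁ + (u₁·∇₁)u₁ = -∇₁p₁ (with ∇₁·u₁ = 0) and ∂_t u₂ + (u₁·∇₁)u₂ + (u₂·∇₂)u₂ = -∇₂p₂ (with ∇₂·u₂ = 0) conserve the two kinetic energies ∫|u₁|² dx₁ and ∫∫|u₂|² dx₂ dx₁ separately: both time derivatives vanish. -/
open MeasureTheory

noncomputable section

abbrev V := Fin 3 → ℝ

def pd (i : Fin 3) (f : V → ℝ) (x : V) : ℝ :=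
  fderiv ℝ f x (Pi.single i 1)

def cube : Set V := Set.Icc 0 1

set_option linter.unusedSectionVars false
set_option maxHeartbeats 1000000


lemma insertNth_one_eq (i : Fin 3) (x : Fin 2 → ℝ) :
    i.insertNth 1 x = i.insertNth 0 x + fun k => ((Pi.single i 1 : Fin 3 → ℤ) k : ℝ) := by
  funext k
  induction k using Fin.succAboveCases with
  | i => exact i
  | x => simp
  | p j => simp [Fin.succAbove_ne i j, (Fin.succAbove_ne i j).symm]

/-- Periodic divergence theorem on the unit cube. -/
lemma integral_div_eq_zero (f : Fin 3 → V → ℝ) (f' : Fin 3 → V → V →L[ℝ] ℝ)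
    (hd : ∀ x i, HasFDerivAt (f i) (f' i x) x)
    (hc : Continuous fun x => ∑ i, f' i x (Pi.single i 1))
    (hper : ∀ i (x : V) (n : Fin 3 → ℤ), f i (x + fun k => (n k : ℝ)) = f i x) :
    ∫ x in cube, ∑ i, f' i x (Pi.single i 1) = 0 := by
  have hle : (0 : V) ≤ 1 := fun i => by norm_num
  have hcf : ∀ i, ContinuousOn (f i) (Set.Icc 0 1) := fun i =>
    (continuous_iff_continuousAt.2 fun x => (hd x i).continuousAt).continuousOn
  have Hi : IntegrableOn (fun x => ∑ i, f' i x (Pi.single i 1)) (Set.Icc (0:V) 1) :=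
    hc.continuousOn.integrableOn_compact isCompact_Icc
  have := integral_divergence_of_hasFDerivAt_off_countable' (a := (0:V)) (b := 1) hle f f' ∅
    Set.countable_empty hcf (fun x _ i => hd x i) Hi
  rw [show cube = Set.Icc (0:V) 1 from rfl, this]
  refine Finset.sum_eq_zero fun i _ => ?_
  rw [sub_eq_zero]
  refine setIntegral_congr_fun (by measurability) fun x _ => ?_
  show f i (i.insertNth ((1:V) i) x) = f i (i.insertNth ((0:V) i) x)
  have h1 : (1:V) i = 1 := rfl
  have h0 : (0:V) i = 0 := rfl
  rw [h1, h0, insertNth_one_eq, hper]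

lemma cube_compact : IsCompact cube := isCompact_Icc
lemma cube_meas : MeasurableSet cube := measurableSet_Icc
lemma cube_finite : volume cube ≠ ⊤ := cube_compact.measure_ne_top

section param
variable {α : Type*} [MeasureSpace α] [TopologicalSpace α] [OpensMeasurableSpace α] [SecondCountableTopology α] [T2Space α]
  [IsFiniteMeasureOnCompacts (volume : Measure α)] {S : Set α}

/-- Continuity of a parametric integral over a compact set of finite measure. -/
lemma continuous_integral_S {X : Type*} [TopologicalSpace X] [WeaklyLocallyCompactSpace X]
    [FirstCountableTopology X] {E : Type*} [NormedAddCommGroup E] [NormedSpace ℝ E]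
    (hSc : IsCompact S) (hSm : MeasurableSet S) (hSf : volume S ≠ ⊤)
    (F : X → α → E) (hF : Continuous fun p : X × α => F p.1 p.2) :
    Continuous fun x => ∫ a in S, F x a := by
  rw [continuous_iff_continuousAt]
  intro x₀
  obtain ⟨K, hK, hKmem⟩ := exists_compact_mem_nhds x₀
  obtain ⟨C, hC⟩ := (hK.prod hSc).exists_bound_of_continuousOn hF.continuousOn
  apply continuousAt_of_dominated (bound := fun _ => C)
  · exact Filter.Eventually.of_forall fun x =>
      (hF.comp (Continuous.prodMk_right x)).aestronglyMeasurable
  · filter_upwards [hKmem] with x hx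
    filter_upwards [self_mem_ae_restrict hSm] with a ha
    exact hC (x, a) ⟨hx, ha⟩
  · exact integrableOn_const hSf
  · exact Filter.Eventually.of_forall fun a =>
      (hF.comp (continuous_id.prodMk continuous_const)).continuousAt

/-- Differentiation under the integral sign, real parameter. -/
lemma hasDerivAt_integral_S (hSc : IsCompact S) (hSm : MeasurableSet S) (hSf : volume S ≠ ⊤)
    (F F' : α → ℝ → ℝ) (t : ℝ)
    (hF : Continuous fun p : α × ℝ => F p.1 p.2)
    (hF' : Continuous fun p : α × ℝ => F' p.1 p.2)
    (hd : ∀ a s, HasDerivAt (F a) (F' a s) s) :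
    HasDerivAt (fun s => ∫ a in S, F a s) (∫ a in S, F' a t) t := by
  have hcont : ContinuousOn (fun p : α × ℝ => F' p.1 p.2) (S ×ˢ Set.Icc (t-1) (t+1)) :=
    hF'.continuousOn
  obtain ⟨C, hC⟩ := (hSc.prod isCompact_Icc).exists_bound_of_continuousOn hcont
  refine (hasDerivAt_integral_of_dominated_loc_of_deriv_le (𝕜 := ℝ) (μ := volume.restrict S)
    (F := fun s a => F a s) (F' := fun s a => F' a s) (x₀ := t) (s := Metric.ball t 1) (bound := fun _ => C)
    (Metric.ball_mem_nhds t one_pos) ?_ ?_ ?_ ?_ ?_ ?_).2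
  · exact Filter.Eventually.of_forall fun s =>
      (hF.comp (continuous_id.prodMk continuous_const)).aestronglyMeasurable
  · exact ((hF.comp (continuous_id.prodMk continuous_const)).continuousOn).integrableOn_compact
      hSc
  · exact (hF'.comp (continuous_id.prodMk continuous_const)).aestronglyMeasurable
  · filter_upwards [self_mem_ae_restrict hSm] with a ha
    intro s hs
    rw [Real.ball_eq_Ioo] at hs
    exact hC (a, s) ⟨ha, ⟨hs.1.le, hs.2.le⟩⟩
  · exact integrableOn_const hSf
  · exact Filter.Eventually.of_forall fun a s _ => hd a s

/-- Differentiation under the integral sign, `V`-valued parameter. -/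
lemma hasFDerivAt_integral_S (hSc : IsCompact S) (hSm : MeasurableSet S) (hSf : volume S ≠ ⊤)
    (F : α → V → ℝ) (F' : α → V → V →L[ℝ] ℝ) (z : V)
    (hF : Continuous fun p : α × V => F p.1 p.2)
    (hF' : Continuous fun p : α × V => F' p.1 p.2)
    (hd : ∀ a y, HasFDerivAt (F a) (F' a y) y) :
    HasFDerivAt (fun y => ∫ a in S, F a y) (∫ a in S, F' a z) z := by
  have hcont : ContinuousOn (fun p : α × V => F' p.1 p.2) (S ×ˢ Metric.closedBall z 1) :=
    hF'.continuousOn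
  obtain ⟨C, hC⟩ := (hSc.prod (isCompact_closedBall z 1)).exists_bound_of_continuousOn hcont
  refine hasFDerivAt_integral_of_dominated_of_fderiv_le (𝕜 := ℝ) (μ := volume.restrict S)
    (F := fun y a => F a y) (F' := fun y a => F' a y) (x₀ := z) (s := Metric.ball z 1) (bound := fun _ => C)
    (Metric.ball_mem_nhds z one_pos) ?_ ?_ ?_ ?_ ?_ ?_
  · exact Filter.Eventually.of_forall fun y =>
      (hF.comp (continuous_id.prodMk continuous_const)).aestronglyMeasurable
  · exact ((hF.comp (continuous_id.prodMk continuous_const)).continuousOn).integrableOn_compact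
      hSc
  · exact (hF'.comp (continuous_id.prodMk continuous_const)).aestronglyMeasurable
  · filter_upwards [self_mem_ae_restrict hSm] with a ha
    intro y hy
    exact hC (a, y) ⟨ha, Metric.ball_subset_closedBall hy⟩
  · exact integrableOn_const hSf
  · exact Filter.Eventually.of_forall fun a y _ => hd a y

end param


set_option linter.unusedSectionVars false

section slices
variable {W : Type*} [NormedAddCommGroup W] [NormedSpace ℝ W]

lemma cont_fderiv_apply (f : W → ℝ) (hf : ContDiff ℝ (⊤ : ℕ∞) f) (v : W) :
    Continuous fun p => fderiv ℝ f p v :=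
  (hf.continuous_fderiv (by simp)).clm_apply continuous_const

lemma cont_fderivCLM (f : W → ℝ) (hf : ContDiff ℝ (⊤ : ℕ∞) f) :
    Continuous fun p => fderiv ℝ f p :=
  hf.continuous_fderiv (by simp)

/-- slice of a two-variable function in the first variable -/
lemma hasFDerivAt_slice1 (f : V × ℝ → ℝ) (hf : ContDiff ℝ (⊤ : ℕ∞) f) (x : V) (t : ℝ) :
    HasFDerivAt (fun y => f (y, t))
      ((fderiv ℝ f (x, t)).comp ((ContinuousLinearMap.id ℝ V).prod 0)) x :=
  (hf.differentiable (by simp) _).hasFDerivAt.comp x ((hasFDerivAt_id x).prodMk (hasFDerivAt_const t x))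

lemma pd_slice1 (f : V × ℝ → ℝ) (hf : ContDiff ℝ (⊤ : ℕ∞) f) (x : V) (t : ℝ) (j : Fin 3) :
    pd j (fun y => f (y, t)) x = fderiv ℝ f (x, t) (Pi.single j 1, 0) := by
  rw [pd, (hasFDerivAt_slice1 f hf x t).fderiv]; rfl

lemma hasDerivAt_slice2 (f : V × ℝ → ℝ) (hf : ContDiff ℝ (⊤ : ℕ∞) f) (x : V) (t : ℝ) :
    HasDerivAt (fun s => f (x, s)) (fderiv ℝ f (x, t) (0, 1)) t :=
  (hf.differentiable (by simp) _).hasFDerivAt.comp_hasDerivAt t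
    ((hasDerivAt_const t x).prodMk (hasDerivAt_id t))

lemma deriv_slice2 (f : V × ℝ → ℝ) (hf : ContDiff ℝ (⊤ : ℕ∞) f) (x : V) (t : ℝ) :
    deriv (fun s => f (x, s)) t = fderiv ℝ f (x, t) (0, 1) :=
  (hasDerivAt_slice2 f hf x t).deriv

/-- slices of a three-variable function -/
lemma hasFDerivAt_slice31 (f : V × V × ℝ → ℝ) (hf : ContDiff ℝ (⊤ : ℕ∞) f) (x₁ x₂ : V) (t : ℝ) :
    HasFDerivAt (fun y => f (y, x₂, t))
      ((fderiv ℝ f (x₁, x₂, t)).comp ((ContinuousLinearMap.id ℝ V).prod 0)) x₁ :=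
  (hf.differentiable (by simp) _).hasFDerivAt.comp x₁
    ((hasFDerivAt_id x₁).prodMk (hasFDerivAt_const (x₂, t) x₁))

lemma pd_slice31 (f : V × V × ℝ → ℝ) (hf : ContDiff ℝ (⊤ : ℕ∞) f) (x₁ x₂ : V) (t : ℝ) (j : Fin 3) :
    pd j (fun y => f (y, x₂, t)) x₁ = fderiv ℝ f (x₁, x₂, t) (Pi.single j 1, 0, 0) := by
  rw [pd, (hasFDerivAt_slice31 f hf x₁ x₂ t).fderiv]; rfl

lemma hasFDerivAt_slice32 (f : V × V × ℝ → ℝ) (hf : ContDiff ℝ (⊤ : ℕ∞) f) (x₁ x₂ : V) (t : ℝ) :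
    HasFDerivAt (fun y => f (x₁, y, t))
      ((fderiv ℝ f (x₁, x₂, t)).comp
        ((0 : V →L[ℝ] V).prod ((ContinuousLinearMap.id ℝ V).prod 0))) x₂ :=
  (hf.differentiable (by simp) _).hasFDerivAt.comp x₂
    ((hasFDerivAt_const x₁ x₂).prodMk ((hasFDerivAt_id x₂).prodMk (hasFDerivAt_const t x₂)))

lemma pd_slice32 (f : V × V × ℝ → ℝ) (hf : ContDiff ℝ (⊤ : ℕ∞) f) (x₁ x₂ : V) (t : ℝ) (j : Fin 3) :
    pd j (fun y => f (x₁, y, t)) x₂ = fderiv ℝ f (x₁, x₂, t) (0, Pi.single j 1, 0) := by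
  rw [pd, (hasFDerivAt_slice32 f hf x₁ x₂ t).fderiv]; rfl

lemma hasDerivAt_slice33 (f : V × V × ℝ → ℝ) (hf : ContDiff ℝ (⊤ : ℕ∞) f) (x₁ x₂ : V) (t : ℝ) :
    HasDerivAt (fun s => f (x₁, x₂, s)) (fderiv ℝ f (x₁, x₂, t) (0, 0, 1)) t :=
  (hf.differentiable (by simp) _).hasFDerivAt.comp_hasDerivAt t
    ((hasDerivAt_const t x₁).prodMk ((hasDerivAt_const t x₂).prodMk (hasDerivAt_id t)))

lemma deriv_slice33 (f : V × V × ℝ → ℝ) (hf : ContDiff ℝ (⊤ : ℕ∞) f) (x₁ x₂ : V) (t : ℝ) :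
    deriv (fun s => f (x₁, x₂, s)) t = fderiv ℝ f (x₁, x₂, t) (0, 0, 1) :=
  (hasDerivAt_slice33 f hf x₁ x₂ t).deriv

end slices

lemma part1 (u₁ : V → ℝ → V) (p₁ : V → ℝ → ℝ)
    (hu₁ : ContDiff ℝ (⊤ : ℕ∞) (fun p : V × ℝ => u₁ p.1 p.2))
    (hp₁ : ContDiff ℝ (⊤ : ℕ∞) (fun p : V × ℝ => p₁ p.1 p.2))
    (hper_u₁ : ∀ (x : V) (t : ℝ) (n : Fin 3 → ℤ), u₁ (x + fun i => (n i : ℝ)) t = u₁ x t)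
    (hper_p₁ : ∀ (x : V) (t : ℝ) (n : Fin 3 → ℤ), p₁ (x + fun i => (n i : ℝ)) t = p₁ x t)
    (hdiv₁ : ∀ (x : V) (t : ℝ), ∑ j, pd j (fun y => u₁ y t j) x = 0)
    (hPDE₁ : ∀ (x : V) (t : ℝ) (i : Fin 3),
      deriv (fun s => u₁ x s i) t + (∑ j, u₁ x t j * pd j (fun y => u₁ y t i) x)
      = - pd i (fun y => p₁ y t) x) (t : ℝ) :
    deriv (fun s => ∫ x in cube, ∑ i, (u₁ x s i) ^ 2) t = 0 := by
  set f : Fin 3 → V × ℝ → ℝ := fun i p => u₁ p.1 p.2 i with hfdef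
  have hf : ∀ i, ContDiff ℝ (⊤ : ℕ∞) (f i) := fun i =>
    (ContinuousLinearMap.proj (R := ℝ) (φ := fun _ : Fin 3 => ℝ) i).contDiff.comp hu₁
  set q : V × ℝ → ℝ := fun p => p₁ p.1 p.2 with hqdef
  -- Step 1 : differentiate under the integral
  have key1 : HasDerivAt (fun s => ∫ x in cube, ∑ i, (u₁ x s i) ^ 2)
      (∫ x in cube, ∑ i, 2 * f i (x, t) * fderiv ℝ (f i) (x, t) (0, 1)) t := by
    have := hasDerivAt_integral_S (S := cube) cube_compact cube_meas cube_finite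
      (fun x s => ∑ i, (u₁ x s i) ^ 2)
      (fun x s => ∑ i, 2 * f i (x, s) * fderiv ℝ (f i) (x, s) (0, 1)) t
      ?_ ?_ ?_
    · exact this
    · exact continuous_finset_sum _ fun i _ => ((hf i).continuous.pow 2)
    · exact continuous_finset_sum _ fun i _ =>
        ((continuous_const.mul (hf i).continuous).mul (cont_fderiv_apply _ (hf i) _))
    · intro x s
      refine HasDerivAt.fun_sum fun i _ => ?_
      have h := (hasDerivAt_slice2 (f i) (hf i) x s).fun_pow 2
      simpa [pow_one, mul_assoc, mul_comm, mul_left_comm] using h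
  -- Step 2 : the integral vanishes
  have key2 : (∫ x in cube, ∑ i, 2 * f i (x, t) * fderiv ℝ (f i) (x, t) (0, 1)) = 0 := by
    set A : Fin 3 → V → ℝ := fun i y => f i (y, t) with hAdef
    set L : Fin 3 → V → V →L[ℝ] ℝ := fun i y =>
      (fderiv ℝ (f i) (y, t)).comp ((ContinuousLinearMap.id ℝ V).prod 0) with hLdef
    have hA : ∀ i y, HasFDerivAt (A i) (L i y) y := fun i y => hasFDerivAt_slice1 (f i) (hf i) y t
    set P : V → ℝ := fun y => q (y, t) with hPdef
    set LP : V → V →L[ℝ] ℝ := fun y =>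
      (fderiv ℝ q (y, t)).comp ((ContinuousLinearMap.id ℝ V).prod 0) with hLPdef
    have hP : ∀ y, HasFDerivAt P (LP y) y := fun y => hasFDerivAt_slice1 q hp₁ y t
    set Eng : V → ℝ := fun y => ∑ i, A i y * A i y with hEngdef
    set LE : V → V →L[ℝ] ℝ := fun y => ∑ i, (A i y • L i y + A i y • L i y) with hLEdef
    have hEng : ∀ y, HasFDerivAt Eng (LE y) y := fun y =>
      HasFDerivAt.fun_sum fun i _ => (hA i y).mul (hA i y)
    set G : Fin 3 → V → ℝ := fun j y => A j y * (Eng y + 2 * P y) with hGdef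
    set G' : Fin 3 → V → V →L[ℝ] ℝ := fun j y =>
      A j y • (LE y + (2 : ℝ) • LP y) + (Eng y + 2 * P y) • L j y with hG'def
    have hG : ∀ (y : V) (j : Fin 3), HasFDerivAt (G j) (G' j y) y := fun y j =>
      (hA j y).mul ((hEng y).add ((hP y).const_mul 2))
    -- continuity of all scalar pieces
    have hAc : ∀ i, Continuous (A i) := fun i =>
      (hf i).continuous.comp (continuous_id.prodMk continuous_const)
    have hLc : ∀ i v, Continuous fun y => L i y v := fun i v => by
      exact (cont_fderiv_apply (f i) (hf i) (v, 0)).comp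
        (continuous_id.prodMk (continuous_const (y := t)))
    have hLPc : ∀ v, Continuous fun y => LP y v := fun v => by
      exact (cont_fderiv_apply q hp₁ (v, 0)).comp
        (continuous_id.prodMk (continuous_const (y := t)))
    have hPc : Continuous P := hp₁.continuous.comp (continuous_id.prodMk continuous_const)
    have hEngc : Continuous Eng := continuous_finset_sum _ fun i _ => (hAc i).mul (hAc i)
    -- the divergence of G, in scalar form
    have hexp : ∀ (y : V) (j : Fin 3), G' j y (Pi.single j 1)
        = A j y * ((∑ i, (A i y * L i y (Pi.single j 1) + A i y * L i y (Pi.single j 1)))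
            + 2 * LP y (Pi.single j 1))
          + (Eng y + 2 * P y) * L j y (Pi.single j 1) := by
      intro y j
      simp [hG'def, hLEdef, smul_eq_mul]
      ring
    have hc : Continuous fun y => ∑ j, G' j y (Pi.single j 1) := by
      have : (fun y => ∑ j, G' j y (Pi.single j 1))
          = fun y => ∑ j, (A j y * ((∑ i, (A i y * L i y (Pi.single j 1)
              + A i y * L i y (Pi.single j 1))) + 2 * LP y (Pi.single j 1))
            + (Eng y + 2 * P y) * L j y (Pi.single j 1)) := by
        funext y; exact Finset.sum_congr rfl fun j _ => hexp y j
      rw [this]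
      refine continuous_finset_sum _ fun j _ => Continuous.add ?_ ?_
      · exact (hAc j).mul ((continuous_finset_sum _ fun i _ =>
          ((hAc i).mul (hLc i _)).add ((hAc i).mul (hLc i _))).add
          (continuous_const.mul (hLPc _)))
      · exact (hEngc.add (continuous_const.mul hPc)).mul (hLc j _)
    -- periodicity of G
    have hGper : ∀ (j : Fin 3) (x : V) (n : Fin 3 → ℤ),
        G j (x + fun k => (n k : ℝ)) = G j x := by
      intro j x n
      have hAper : ∀ i, A i (x + fun k => (n k : ℝ)) = A i x := by
        intro i
        show u₁ (x + fun k => (n k : ℝ)) t i = u₁ x t i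
        rw [hper_u₁]
      have hPper : P (x + fun k => (n k : ℝ)) = P x := by
        show p₁ (x + fun k => (n k : ℝ)) t = p₁ x t
        rw [hper_p₁]
      simp only [hGdef, hEngdef, hAper, hPper]
    have hzero : ∫ x in cube, ∑ j, G' j x (Pi.single j 1) = 0 :=
      integral_div_eq_zero G G' (fun x j => hG x j) hc hGper
    -- pointwise identity between the integrands
    have hpt : ∀ x : V, (∑ i, 2 * f i (x, t) * fderiv ℝ (f i) (x, t) (0, 1))
        = -(∑ j, G' j x (Pi.single j 1)) := by
      intro x
      have hdiv' : ∑ j, L j x (Pi.single j 1) = 0 := by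
        have := hdiv₁ x t
        have e : ∀ j, pd j (fun y => u₁ y t j) x = L j x (Pi.single j 1) := fun j => by
          rw [show (fun y => u₁ y t j) = fun y => f j (y, t) from rfl,
            pd_slice1 (f j) (hf j) x t j]; rfl
        rwa [Finset.sum_congr rfl fun j _ => e j] at this
      have hPDE' : ∀ i : Fin 3, fderiv ℝ (f i) (x, t) (0, 1)
          + (∑ j, A j x * L i x (Pi.single j 1)) = - LP x (Pi.single i 1) := by
        intro i
        have := hPDE₁ x t i
        have e1 : deriv (fun s => u₁ x s i) t = fderiv ℝ (f i) (x, t) (0, 1) :=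
          deriv_slice2 (f i) (hf i) x t
        have e2 : ∀ j, pd j (fun y => u₁ y t i) x = L i x (Pi.single j 1) := fun j => by
          rw [show (fun y => u₁ y t i) = fun y => f i (y, t) from rfl,
            pd_slice1 (f i) (hf i) x t j]; rfl
        have e3 : pd i (fun y => p₁ y t) x = LP x (Pi.single i 1) := by
          rw [show (fun y => p₁ y t) = fun y => q (y, t) from rfl,
            pd_slice1 q hp₁ x t i]; rfl
        rw [e1, e3] at this
        have es : ∑ j, A j x * L i x (Pi.single j 1)
            = ∑ j, u₁ x t j * pd j (fun y => u₁ y t i) x :=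
          Finset.sum_congr rfl fun j _ => by rw [e2]
        rw [es]
        exact this
      have hrhs : (∑ j, G' j x (Pi.single j 1))
          = ∑ j, (A j x * ((∑ i, (A i x * L i x (Pi.single j 1)
              + A i x * L i x (Pi.single j 1))) + 2 * LP x (Pi.single j 1))
            + (Eng x + 2 * P x) * L j x (Pi.single j 1)) :=
        Finset.sum_congr rfl fun j _ => hexp x j
      rw [hrhs]
      have hfa : ∀ i : Fin 3, f i (x, t) = A i x := fun i => rfl
      have h0 := hPDE' 0
      have h1 := hPDE' 1
      have h2 := hPDE' 2
      have hE : Eng x = A 0 x * A 0 x + A 1 x * A 1 x + A 2 x * A 2 x := by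
        simp [hEngdef, Fin.sum_univ_three]
      simp only [Fin.sum_univ_three] at hdiv' h0 h1 h2 ⊢
      simp only [hfa, hE]
      linear_combination (2 * A 0 x) * h0 + (2 * A 1 x) * h1 + (2 * A 2 x) * h2
        + (A 0 x * A 0 x + A 1 x * A 1 x + A 2 x * A 2 x + 2 * P x) * hdiv'
    calc (∫ x in cube, ∑ i, 2 * f i (x, t) * fderiv ℝ (f i) (x, t) (0, 1))
        = ∫ x in cube, -(∑ j, G' j x (Pi.single j 1)) := by
          exact setIntegral_congr_fun cube_meas fun x _ => hpt x
      _ = -(∫ x in cube, ∑ j, G' j x (Pi.single j 1)) := by rw [integral_neg]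
      _ = 0 := by rw [hzero, neg_zero]
  rw [key2] at key1
  exact key1.deriv

lemma part2 (u₁ : V → ℝ → V) (u₂ : V → V → ℝ → V) (p₂ : V → V → ℝ → ℝ)
    (hu₁ : ContDiff ℝ (⊤ : ℕ∞) (fun p : V × ℝ => u₁ p.1 p.2))
    (hu₂ : ContDiff ℝ (⊤ : ℕ∞) (fun p : V × V × ℝ => u₂ p.1 p.2.1 p.2.2))
    (hp₂ : ContDiff ℝ (⊤ : ℕ∞) (fun p : V × V × ℝ => p₂ p.1 p.2.1 p.2.2))
    (hper_u₁ : ∀ (x : V) (t : ℝ) (n : Fin 3 → ℤ), u₁ (x + fun i => (n i : ℝ)) t = u₁ x t)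
    (hper_u₂ : ∀ (x₁ x₂ : V) (t : ℝ) (n m : Fin 3 → ℤ),
      u₂ (x₁ + fun i => (n i : ℝ)) (x₂ + fun i => (m i : ℝ)) t = u₂ x₁ x₂ t)
    (hper_p₂ : ∀ (x₁ x₂ : V) (t : ℝ) (n m : Fin 3 → ℤ),
      p₂ (x₁ + fun i => (n i : ℝ)) (x₂ + fun i => (m i : ℝ)) t = p₂ x₁ x₂ t)
    (hdiv₁ : ∀ (x : V) (t : ℝ), ∑ j, pd j (fun y => u₁ y t j) x = 0)
    (hdiv₂ : ∀ (x₁ x₂ : V) (t : ℝ), ∑ j, pd j (fun y => u₂ x₁ y t j) x₂ = 0)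
    (hPDE₂ : ∀ (x₁ x₂ : V) (t : ℝ) (i : Fin 3),
      deriv (fun s => u₂ x₁ x₂ s i) t
        + (∑ j, u₁ x₁ t j * pd j (fun y => u₂ y x₂ t i) x₁)
        + (∑ j, u₂ x₁ x₂ t j * pd j (fun y => u₂ x₁ y t i) x₂)
      = - pd i (fun y => p₂ x₁ y t) x₂) (t : ℝ) :
    deriv (fun s => ∫ x₁ in cube, ∫ x₂ in cube, ∑ i, (u₂ x₁ x₂ s i) ^ 2) t = 0 := by
  have Q2c : IsCompact (cube ×ˢ cube) := cube_compact.prod cube_compact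
  have Q2m : MeasurableSet (cube ×ˢ cube) := cube_meas.prod cube_meas
  have Q2f : volume (cube ×ˢ cube) ≠ ⊤ := Q2c.measure_ne_top
  -- joint component functions
  set f2 : Fin 3 → V × V × ℝ → ℝ := fun i p => u₂ p.1 p.2.1 p.2.2 i with hf2def
  have hf2 : ∀ i, ContDiff ℝ (⊤ : ℕ∞) (f2 i) := fun i =>
    (ContinuousLinearMap.proj (R := ℝ) (φ := fun _ : Fin 3 => ℝ) i).contDiff.comp hu₂
  set q2 : V × V × ℝ → ℝ := fun p => p₂ p.1 p.2.1 p.2.2 with hq2def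
  set f1 : Fin 3 → V × ℝ → ℝ := fun i p => u₁ p.1 p.2 i with hf1def
  have hf1 : ∀ i, ContDiff ℝ (⊤ : ℕ∞) (f1 i) := fun i =>
    (ContinuousLinearMap.proj (R := ℝ) (φ := fun _ : Fin 3 => ℝ) i).contDiff.comp hu₁
  have ctrip : Continuous fun p : (V × V) × ℝ => (p.1.1, p.1.2, p.2) :=
    (continuous_fst.fst).prodMk ((continuous_fst.snd).prodMk continuous_snd)
  have cpair : Continuous fun z : V × V => (z.1, z.2, t) :=
    continuous_fst.prodMk (continuous_snd.prodMk continuous_const)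
  -- Step A: differentiate under the (double) integral
  have hrw : ∀ s : ℝ, (∫ x₁ in cube, ∫ x₂ in cube, ∑ i, (u₂ x₁ x₂ s i) ^ 2)
      = ∫ z in cube ×ˢ cube, ∑ i, (u₂ z.1 z.2 s i) ^ 2 := by
    intro s
    have hcont : Continuous fun z : V × V => ∑ i, (u₂ z.1 z.2 s i) ^ 2 := by
      refine continuous_finset_sum _ fun i _ => ?_
      exact (((hf2 i).continuous.comp
        (continuous_fst.prodMk (continuous_snd.prodMk continuous_const)))).pow 2
    have hint : IntegrableOn (fun z : V × V => ∑ i, (u₂ z.1 z.2 s i) ^ 2) (cube ×ˢ cube) :=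
      hcont.continuousOn.integrableOn_compact Q2c
    rw [show (volume : Measure (V × V)) = (volume : Measure V).prod volume from rfl] at hint ⊢
    exact (MeasureTheory.setIntegral_prod _ hint).symm
  have key1 : HasDerivAt (fun s => ∫ z in cube ×ˢ cube, ∑ i, (u₂ z.1 z.2 s i) ^ 2)
      (∫ z in cube ×ˢ cube,
        ∑ i, 2 * f2 i (z.1, z.2, t) * fderiv ℝ (f2 i) (z.1, z.2, t) (0, 0, 1)) t := by
    have := hasDerivAt_integral_S (S := cube ×ˢ cube) Q2c Q2m Q2f
      (fun z s => ∑ i, (u₂ z.1 z.2 s i) ^ 2)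
      (fun z s => ∑ i, 2 * f2 i (z.1, z.2, s) * fderiv ℝ (f2 i) (z.1, z.2, s) (0, 0, 1)) t
      ?_ ?_ ?_
    · exact this
    · exact continuous_finset_sum _ fun i _ => (((hf2 i).continuous.comp ctrip)).pow 2
    · exact continuous_finset_sum _ fun i _ =>
        ((continuous_const.mul ((hf2 i).continuous.comp ctrip)).mul
          ((cont_fderiv_apply _ (hf2 i) _).comp ctrip))
    · intro z s
      refine HasDerivAt.fun_sum fun i _ => ?_
      have h := (hasDerivAt_slice33 (f2 i) (hf2 i) z.1 z.2 s).fun_pow 2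
      simpa [pow_one, mul_assoc, mul_comm, mul_left_comm] using h
  have zero_intvec : (fun k : Fin 3 => ((0 : Fin 3 → ℤ) k : ℝ)) = (0 : V) := by
    funext k; simp
  have key2 : (∫ z in cube ×ˢ cube,
      ∑ i, 2 * f2 i (z.1, z.2, t) * fderiv ℝ (f2 i) (z.1, z.2, t) (0, 0, 1)) = 0 := by
    classical
    set A2 : Fin 3 → V → V → ℝ := fun i y x₂ => f2 i (y, x₂, t) with hA2def
    set L1 : Fin 3 → V → V → V →L[ℝ] ℝ := fun i y x₂ =>
      (fderiv ℝ (f2 i) (y, x₂, t)).comp ((ContinuousLinearMap.id ℝ V).prod 0) with hL1def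
    have hA21 : ∀ i (y x₂ : V), HasFDerivAt (fun y => A2 i y x₂) (L1 i y x₂) y := fun i y x₂ =>
      hasFDerivAt_slice31 (f2 i) (hf2 i) y x₂ t
    set L2 : Fin 3 → V → V → V →L[ℝ] ℝ := fun i y x₂ =>
      (fderiv ℝ (f2 i) (y, x₂, t)).comp
        ((0 : V →L[ℝ] V).prod ((ContinuousLinearMap.id ℝ V).prod 0)) with hL2def
    have hA22 : ∀ i (y x₂ : V), HasFDerivAt (fun x₂ => A2 i y x₂) (L2 i y x₂) x₂ := fun i y x₂ =>
      hasFDerivAt_slice32 (f2 i) (hf2 i) y x₂ t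
    set P2 : V → V → ℝ := fun y x₂ => q2 (y, x₂, t) with hP2def
    set LP2 : V → V → V →L[ℝ] ℝ := fun y x₂ =>
      (fderiv ℝ q2 (y, x₂, t)).comp
        ((0 : V →L[ℝ] V).prod ((ContinuousLinearMap.id ℝ V).prod 0)) with hLP2def
    have hP2d : ∀ (y x₂ : V), HasFDerivAt (fun x₂ => P2 y x₂) (LP2 y x₂) x₂ := fun y x₂ =>
      hasFDerivAt_slice32 q2 hp₂ y x₂ t
    set Eng2 : V → V → ℝ := fun y x₂ => ∑ i, A2 i y x₂ * A2 i y x₂ with hEng2def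
    set LE1 : V → V → V →L[ℝ] ℝ := fun y x₂ =>
      ∑ i, (A2 i y x₂ • L1 i y x₂ + A2 i y x₂ • L1 i y x₂) with hLE1def
    have hEng1 : ∀ (y x₂ : V), HasFDerivAt (fun y => Eng2 y x₂) (LE1 y x₂) y := fun y x₂ =>
      HasFDerivAt.fun_sum fun i _ => (hA21 i y x₂).mul (hA21 i y x₂)
    set LE2 : V → V → V →L[ℝ] ℝ := fun y x₂ =>
      ∑ i, (A2 i y x₂ • L2 i y x₂ + A2 i y x₂ • L2 i y x₂) with hLE2def
    have hEng2' : ∀ (y x₂ : V), HasFDerivAt (fun x₂ => Eng2 y x₂) (LE2 y x₂) x₂ := fun y x₂ =>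
      HasFDerivAt.fun_sum fun i _ => (hA22 i y x₂).mul (hA22 i y x₂)
    -- joint continuity at fixed t
    have cA2 : ∀ i, Continuous fun z : V × V => A2 i z.1 z.2 := fun i =>
      (hf2 i).continuous.comp cpair
    have cL1 : ∀ i, Continuous fun z : V × V => L1 i z.1 z.2 := fun i =>
      Continuous.clm_comp ((cont_fderivCLM (f2 i) (hf2 i)).comp cpair) continuous_const
    have cL2 : ∀ i, Continuous fun z : V × V => L2 i z.1 z.2 := fun i =>
      Continuous.clm_comp ((cont_fderivCLM (f2 i) (hf2 i)).comp cpair) continuous_const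
    have cLP2 : Continuous fun z : V × V => LP2 z.1 z.2 :=
      Continuous.clm_comp ((cont_fderivCLM q2 hp₂).comp cpair) continuous_const
    have cP2 : Continuous fun z : V × V => P2 z.1 z.2 := hp₂.continuous.comp cpair
    have cEng2 : Continuous fun z : V × V => Eng2 z.1 z.2 :=
      continuous_finset_sum _ fun i _ => (cA2 i).mul (cA2 i)
    have cLE1 : Continuous fun z : V × V => LE1 z.1 z.2 :=
      continuous_finset_sum _ fun i _ => (((cA2 i).smul (cL1 i)).add ((cA2 i).smul (cL1 i)))
    -- Q and its derivative
    set Q : V → ℝ := fun y => ∫ x₂ in cube, Eng2 y x₂ with hQdef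
    set MQ : V → V →L[ℝ] ℝ := fun y => ∫ x₂ in cube, LE1 y x₂ with hMQdef
    have hQ : ∀ z : V, HasFDerivAt Q (MQ z) z := fun z =>
      hasFDerivAt_integral_S cube_compact cube_meas cube_finite
        (fun x₂ y => Eng2 y x₂) (fun x₂ y => LE1 y x₂) z
        (cEng2.comp (continuous_snd.prodMk continuous_fst))
        (cLE1.comp (continuous_snd.prodMk continuous_fst))
        (fun x₂ y => hEng1 y x₂)
    have hQc : Continuous Q :=
      continuous_integral_S cube_compact cube_meas cube_finite (fun y x₂ => Eng2 y x₂) cEng2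
    have hMQc : Continuous MQ :=
      continuous_integral_S cube_compact cube_meas cube_finite (fun y x₂ => LE1 y x₂) cLE1
    -- A1 data
    set A1 : Fin 3 → V → ℝ := fun j y => f1 j (y, t) with hA1def
    set LA1 : Fin 3 → V → V →L[ℝ] ℝ := fun j y =>
      (fderiv ℝ (f1 j) (y, t)).comp ((ContinuousLinearMap.id ℝ V).prod 0) with hLA1def
    have hA1 : ∀ j y, HasFDerivAt (A1 j) (LA1 j y) y := fun j y =>
      hasFDerivAt_slice1 (f1 j) (hf1 j) y t
    have cA1 : ∀ j, Continuous (A1 j) := fun j =>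
      (hf1 j).continuous.comp (continuous_id.prodMk continuous_const)
    have cLA1 : ∀ j v, Continuous fun y => LA1 j y v := fun j v => by
      exact (cont_fderiv_apply (f1 j) (hf1 j) (v, 0)).comp
        (continuous_id.prodMk (continuous_const (y := t)))
    -- the inner integral
    have inner : ∀ x₁ : V,
        (∫ x₂ in cube, ∑ i, 2 * f2 i (x₁, x₂, t) * fderiv ℝ (f2 i) (x₁, x₂, t) (0, 0, 1))
          = -(∑ j, A1 j x₁ * MQ x₁ (Pi.single j 1)) := by
      intro x₁
      set G2 : Fin 3 → V → ℝ := fun j x₂ => A2 j x₁ x₂ * (Eng2 x₁ x₂ + 2 * P2 x₁ x₂) with hG2def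
      set G2' : Fin 3 → V → V →L[ℝ] ℝ := fun j x₂ =>
        A2 j x₁ x₂ • (LE2 x₁ x₂ + (2 : ℝ) • LP2 x₁ x₂)
          + (Eng2 x₁ x₂ + 2 * P2 x₁ x₂) • L2 j x₁ x₂ with hG2'def
      have hG2 : ∀ (x₂ : V) (j : Fin 3), HasFDerivAt (G2 j) (G2' j x₂) x₂ := fun x₂ j =>
        (hA22 j x₁ x₂).mul ((hEng2' x₁ x₂).add ((hP2d x₁ x₂).const_mul 2))
      have hexp2 : ∀ (x₂ : V) (j : Fin 3), G2' j x₂ (Pi.single j 1)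
          = A2 j x₁ x₂ * ((∑ i, (A2 i x₁ x₂ * L2 i x₁ x₂ (Pi.single j 1)
              + A2 i x₁ x₂ * L2 i x₁ x₂ (Pi.single j 1))) + 2 * LP2 x₁ x₂ (Pi.single j 1))
            + (Eng2 x₁ x₂ + 2 * P2 x₁ x₂) * L2 j x₁ x₂ (Pi.single j 1) := by
        intro x₂ j
        simp [hG2'def, hLE2def, smul_eq_mul]
        ring
      have hc2 : Continuous fun x₂ => ∑ j, G2' j x₂ (Pi.single j 1) := by
        have : (fun x₂ => ∑ j, G2' j x₂ (Pi.single j 1))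
            = fun x₂ => ∑ j, (A2 j x₁ x₂ * ((∑ i, (A2 i x₁ x₂ * L2 i x₁ x₂ (Pi.single j 1)
                + A2 i x₁ x₂ * L2 i x₁ x₂ (Pi.single j 1))) + 2 * LP2 x₁ x₂ (Pi.single j 1))
              + (Eng2 x₁ x₂ + 2 * P2 x₁ x₂) * L2 j x₁ x₂ (Pi.single j 1)) := by
          funext x₂; exact Finset.sum_congr rfl fun j _ => hexp2 x₂ j
        rw [this]
        have fix1 : ∀ {E : Type} [TopologicalSpace E] {g : V × V → E}, Continuous g →
            Continuous fun x₂ : V => g (x₁, x₂) := fun hg =>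
          hg.comp (continuous_const.prodMk continuous_id)
        refine continuous_finset_sum _ fun j _ => Continuous.add ?_ ?_
        · exact (fix1 (cA2 j)).mul ((continuous_finset_sum _ fun i _ =>
            ((fix1 (cA2 i)).mul (fix1 ((cL2 i).clm_apply continuous_const))).add
            ((fix1 (cA2 i)).mul (fix1 ((cL2 i).clm_apply continuous_const)))).add
            (continuous_const.mul (fix1 (cLP2.clm_apply continuous_const))))
        · exact ((fix1 cEng2).add (continuous_const.mul (fix1 cP2))).mul
            (fix1 ((cL2 j).clm_apply continuous_const))
      have hG2per : ∀ (j : Fin 3) (x₂ : V) (m : Fin 3 → ℤ),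
          G2 j (x₂ + fun k => (m k : ℝ)) = G2 j x₂ := by
        intro j x₂ m
        have hA2per : ∀ i, A2 i x₁ (x₂ + fun k => (m k : ℝ)) = A2 i x₁ x₂ := by
          intro i
          have h5 := hper_u₂ x₁ x₂ t 0 m
          rw [zero_intvec, add_zero] at h5
          exact congrFun h5 i
        have hP2per : P2 x₁ (x₂ + fun k => (m k : ℝ)) = P2 x₁ x₂ := by
          show p₂ x₁ (x₂ + fun k => (m k : ℝ)) t = p₂ x₁ x₂ t
          have := hper_p₂ x₁ x₂ t 0 m
          rwa [zero_intvec, add_zero] at this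
        simp only [hG2def, hEng2def, hA2per, hP2per]
      have hzero2 : ∫ x₂ in cube, ∑ j, G2' j x₂ (Pi.single j 1) = 0 :=
        integral_div_eq_zero G2 G2' hG2 hc2 hG2per
      -- pointwise identity
      have hpt : ∀ x₂ : V,
          (∑ i, 2 * f2 i (x₁, x₂, t) * fderiv ℝ (f2 i) (x₁, x₂, t) (0, 0, 1))
            = -(∑ j, A1 j x₁ * LE1 x₁ x₂ (Pi.single j 1)) - ∑ j, G2' j x₂ (Pi.single j 1) := by
        intro x₂
        have hdiv' : ∑ j, L2 j x₁ x₂ (Pi.single j 1) = 0 := by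
          have := hdiv₂ x₁ x₂ t
          have e : ∀ j, pd j (fun y => u₂ x₁ y t j) x₂ = L2 j x₁ x₂ (Pi.single j 1) := fun j => by
            rw [show (fun y => u₂ x₁ y t j) = fun y => f2 j (x₁, y, t) from rfl,
              pd_slice32 (f2 j) (hf2 j) x₁ x₂ t j]; rfl
          rwa [Finset.sum_congr rfl fun j _ => e j] at this
        have hPDE' : ∀ i : Fin 3, fderiv ℝ (f2 i) (x₁, x₂, t) (0, 0, 1)
            + (∑ j, A1 j x₁ * L1 i x₁ x₂ (Pi.single j 1))
            + (∑ j, A2 j x₁ x₂ * L2 i x₁ x₂ (Pi.single j 1))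
            = - LP2 x₁ x₂ (Pi.single i 1) := by
          intro i
          have h := hPDE₂ x₁ x₂ t i
          have e1 : deriv (fun s => u₂ x₁ x₂ s i) t = fderiv ℝ (f2 i) (x₁, x₂, t) (0, 0, 1) :=
            deriv_slice33 (f2 i) (hf2 i) x₁ x₂ t
          have e2 : ∀ j, pd j (fun y => u₂ y x₂ t i) x₁ = L1 i x₁ x₂ (Pi.single j 1) := fun j => by
            rw [show (fun y => u₂ y x₂ t i) = fun y => f2 i (y, x₂, t) from rfl,
              pd_slice31 (f2 i) (hf2 i) x₁ x₂ t j]; rfl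
          have e3 : ∀ j, pd j (fun y => u₂ x₁ y t i) x₂ = L2 i x₁ x₂ (Pi.single j 1) := fun j => by
            rw [show (fun y => u₂ x₁ y t i) = fun y => f2 i (x₁, y, t) from rfl,
              pd_slice32 (f2 i) (hf2 i) x₁ x₂ t j]; rfl
          have e4 : pd i (fun y => p₂ x₁ y t) x₂ = LP2 x₁ x₂ (Pi.single i 1) := by
            rw [show (fun y => p₂ x₁ y t) = fun y => q2 (x₁, y, t) from rfl,
              pd_slice32 q2 hp₂ x₁ x₂ t i]; rfl
          rw [e1, e4] at h
          have es1 : ∑ j, A1 j x₁ * L1 i x₁ x₂ (Pi.single j 1)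
              = ∑ j, u₁ x₁ t j * pd j (fun y => u₂ y x₂ t i) x₁ :=
            Finset.sum_congr rfl fun j _ => by rw [e2]
          have es2 : ∑ j, A2 j x₁ x₂ * L2 i x₁ x₂ (Pi.single j 1)
              = ∑ j, u₂ x₁ x₂ t j * pd j (fun y => u₂ x₁ y t i) x₂ :=
            Finset.sum_congr rfl fun j _ => by rw [e3]
          rw [es1, es2]
          exact h
        have hrhs2 : (∑ j, G2' j x₂ (Pi.single j 1))
            = ∑ j, (A2 j x₁ x₂ * ((∑ i, (A2 i x₁ x₂ * L2 i x₁ x₂ (Pi.single j 1)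
                + A2 i x₁ x₂ * L2 i x₁ x₂ (Pi.single j 1))) + 2 * LP2 x₁ x₂ (Pi.single j 1))
              + (Eng2 x₁ x₂ + 2 * P2 x₁ x₂) * L2 j x₁ x₂ (Pi.single j 1)) :=
          Finset.sum_congr rfl fun j _ => hexp2 x₂ j
        have hLE1app : ∀ j : Fin 3, LE1 x₁ x₂ (Pi.single j 1)
            = ∑ i, (A2 i x₁ x₂ * L1 i x₁ x₂ (Pi.single j 1)
                + A2 i x₁ x₂ * L1 i x₁ x₂ (Pi.single j 1)) := by
          intro j; simp [hLE1def, smul_eq_mul]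
        have hfa : ∀ i : Fin 3, f2 i (x₁, x₂, t) = A2 i x₁ x₂ := fun i => rfl
        have hE : Eng2 x₁ x₂ = A2 0 x₁ x₂ * A2 0 x₁ x₂ + A2 1 x₁ x₂ * A2 1 x₁ x₂
            + A2 2 x₁ x₂ * A2 2 x₁ x₂ := by
          simp [hEng2def, Fin.sum_univ_three]
        rw [hrhs2]
        have h0 := hPDE' 0
        have h1 := hPDE' 1
        have h2 := hPDE' 2
        simp only [Fin.sum_univ_three] at hdiv' h0 h1 h2 ⊢
        simp only [hLE1app, Fin.sum_univ_three, hfa, hE]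
        linear_combination (2 * A2 0 x₁ x₂) * h0 + (2 * A2 1 x₁ x₂) * h1
          + (2 * A2 2 x₁ x₂) * h2
          + (A2 0 x₁ x₂ * A2 0 x₁ x₂ + A2 1 x₁ x₂ * A2 1 x₁ x₂ + A2 2 x₁ x₂ * A2 2 x₁ x₂
              + 2 * P2 x₁ x₂) * hdiv'
      -- integrate the pointwise identity over x₂
      have fix1 : ∀ {E : Type} [TopologicalSpace E] {g : V × V → E}, Continuous g →
          Continuous fun x₂ : V => g (x₁, x₂) := fun hg =>
        hg.comp (continuous_const.prodMk continuous_id)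
      have intLE1 : IntegrableOn (fun x₂ => LE1 x₁ x₂) cube :=
        (fix1 cLE1).continuousOn.integrableOn_compact cube_compact
      have intterm1 : ∀ j : Fin 3,
          IntegrableOn (fun x₂ => A1 j x₁ * LE1 x₁ x₂ (Pi.single j 1)) cube := fun j =>
        ((continuous_const.mul (fix1 (cLE1.clm_apply continuous_const))).continuousOn).integrableOn_compact
          cube_compact
      have int1 : IntegrableOn (fun x₂ => -(∑ j, A1 j x₁ * LE1 x₁ x₂ (Pi.single j 1))) cube :=
        (MeasureTheory.integrable_finset_sum _ fun j _ => intterm1 j).neg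
      have int2 : IntegrableOn (fun x₂ => ∑ j, G2' j x₂ (Pi.single j 1)) cube :=
        hc2.continuousOn.integrableOn_compact cube_compact
      calc (∫ x₂ in cube, ∑ i, 2 * f2 i (x₁, x₂, t) * fderiv ℝ (f2 i) (x₁, x₂, t) (0, 0, 1))
          = ∫ x₂ in cube, (-(∑ j, A1 j x₁ * LE1 x₁ x₂ (Pi.single j 1))
              - ∑ j, G2' j x₂ (Pi.single j 1)) :=
            setIntegral_congr_fun cube_meas fun x₂ _ => hpt x₂
        _ = (∫ x₂ in cube, -(∑ j, A1 j x₁ * LE1 x₁ x₂ (Pi.single j 1)))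
              - ∫ x₂ in cube, ∑ j, G2' j x₂ (Pi.single j 1) := integral_sub int1 int2
        _ = -(∑ j, A1 j x₁ * MQ x₁ (Pi.single j 1)) := by
            rw [hzero2, sub_zero, integral_neg]
            congr 1
            rw [MeasureTheory.integral_finset_sum _ fun j _ => intterm1 j]
            refine Finset.sum_congr rfl fun j _ => ?_
            rw [MeasureTheory.integral_const_mul]
            congr 1
            exact (ContinuousLinearMap.integral_apply intLE1 (Pi.single j 1)).symm
    -- now the outer integral
    have houter : (∫ z in cube ×ˢ cube,
        ∑ i, 2 * f2 i (z.1, z.2, t) * fderiv ℝ (f2 i) (z.1, z.2, t) (0, 0, 1))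
        = ∫ x₁ in cube, ∫ x₂ in cube,
            ∑ i, 2 * f2 i (x₁, x₂, t) * fderiv ℝ (f2 i) (x₁, x₂, t) (0, 0, 1) := by
      have hcont : Continuous fun z : V × V =>
          ∑ i, 2 * f2 i (z.1, z.2, t) * fderiv ℝ (f2 i) (z.1, z.2, t) (0, 0, 1) :=
        continuous_finset_sum _ fun i _ =>
          (continuous_const.mul ((hf2 i).continuous.comp cpair)).mul
            ((cont_fderiv_apply _ (hf2 i) _).comp cpair)
      have hint : IntegrableOn (fun z : V × V =>
          ∑ i, 2 * f2 i (z.1, z.2, t) * fderiv ℝ (f2 i) (z.1, z.2, t) (0, 0, 1))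
          (cube ×ˢ cube) := hcont.continuousOn.integrableOn_compact Q2c
      rw [show (volume : Measure (V × V)) = (volume : Measure V).prod volume from rfl] at hint ⊢
      exact MeasureTheory.setIntegral_prod _ hint
    rw [houter,
      setIntegral_congr_fun cube_meas (fun x₁ _ => inner x₁)]
    -- final divergence argument in x₁
    set H : Fin 3 → V → ℝ := fun j y => A1 j y * Q y with hHdef
    set H' : Fin 3 → V → V →L[ℝ] ℝ := fun j y => A1 j y • MQ y + Q y • LA1 j y with hH'def
    have hH : ∀ (y : V) (j : Fin 3), HasFDerivAt (H j) (H' j y) y := fun y j =>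
      (hA1 j y).mul (hQ y)
    have hexp3 : ∀ (y : V) (j : Fin 3), H' j y (Pi.single j 1)
        = A1 j y * MQ y (Pi.single j 1) + Q y * LA1 j y (Pi.single j 1) := by
      intro y j; simp [hH'def, smul_eq_mul]
    have hH'c : Continuous fun y => ∑ j, H' j y (Pi.single j 1) := by
      have : (fun y => ∑ j, H' j y (Pi.single j 1))
          = fun y => ∑ j, (A1 j y * MQ y (Pi.single j 1) + Q y * LA1 j y (Pi.single j 1)) := by
        funext y; exact Finset.sum_congr rfl fun j _ => hexp3 y j
      rw [this]
      exact continuous_finset_sum _ fun j _ =>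
        ((cA1 j).mul (hMQc.clm_apply continuous_const)).add (hQc.mul (cLA1 j _))
    have hHper : ∀ (j : Fin 3) (y : V) (n : Fin 3 → ℤ),
        H j (y + fun k => (n k : ℝ)) = H j y := by
      intro j y n
      have hA1per : A1 j (y + fun k => (n k : ℝ)) = A1 j y := by
        exact congrFun (hper_u₁ y t n) j
      have hQper : Q (y + fun k => (n k : ℝ)) = Q y := by
        simp only [hQdef]
        refine setIntegral_congr_fun cube_meas fun x₂ _ => ?_
        simp only [hEng2def]
        refine Finset.sum_congr rfl fun i _ => ?_
        have h5 := hper_u₂ y x₂ t n 0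
        rw [zero_intvec, add_zero] at h5
        have : A2 i (y + fun k => (n k : ℝ)) x₂ = A2 i y x₂ := congrFun h5 i
        rw [this]
      simp only [hHdef, hA1per, hQper]
    have hzero3 : ∫ y in cube, ∑ j, H' j y (Pi.single j 1) = 0 :=
      integral_div_eq_zero H H' hH hH'c hHper
    have hpt3 : ∀ y : V, -(∑ j, A1 j y * MQ y (Pi.single j 1))
        = -(∑ j, H' j y (Pi.single j 1)) := by
      intro y
      have hdivA1 : ∑ j, LA1 j y (Pi.single j 1) = 0 := by
        have := hdiv₁ y t
        have e : ∀ j, pd j (fun x => u₁ x t j) y = LA1 j y (Pi.single j 1) := fun j => by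
          rw [show (fun x => u₁ x t j) = fun x => f1 j (x, t) from rfl,
            pd_slice1 (f1 j) (hf1 j) y t j]; rfl
        rwa [Finset.sum_congr rfl fun j _ => e j] at this
      have : ∑ j, H' j y (Pi.single j 1)
          = ∑ j, (A1 j y * MQ y (Pi.single j 1) + Q y * LA1 j y (Pi.single j 1)) :=
        Finset.sum_congr rfl fun j _ => hexp3 y j
      rw [this, Finset.sum_add_distrib, ← Finset.mul_sum, hdivA1, mul_zero, add_zero]
    rw [setIntegral_congr_fun cube_meas (fun y _ => hpt3 y), integral_neg, hzero3, neg_zero]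
  have : deriv (fun s => ∫ x₁ in cube, ∫ x₂ in cube, ∑ i, (u₂ x₁ x₂ s i) ^ 2) t
      = deriv (fun s => ∫ z in cube ×ˢ cube, ∑ i, (u₂ z.1 z.2 s i) ^ 2) t := by
    congr 1; funext s; exact hrw s
  rw [this, key1.deriv, key2]

/-- The decoupled two-scale Euler system conserves the two kinetic energies
∫|u₁|² dx₁ and ∬|u₂|² dx₂ dx₁ separately. -/
theorem two_scale_energies_conserved
    (u₁ : V → ℝ → V) (u₂ : V → V → ℝ → V) (p₁ : V → ℝ → ℝ) (p₂ : V → V → ℝ → ℝ)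
    (hu₁ : ContDiff ℝ (⊤ : ℕ∞) (fun p : V × ℝ => u₁ p.1 p.2))
    (hu₂ : ContDiff ℝ (⊤ : ℕ∞) (fun p : V × V × ℝ => u₂ p.1 p.2.1 p.2.2))
    (hp₁ : ContDiff ℝ (⊤ : ℕ∞) (fun p : V × ℝ => p₁ p.1 p.2))
    (hp₂ : ContDiff ℝ (⊤ : ℕ∞) (fun p : V × V × ℝ => p₂ p.1 p.2.1 p.2.2))
    (hper_u₁ : ∀ (x : V) (t : ℝ) (n : Fin 3 → ℤ), u₁ (x + fun i => (n i : ℝ)) t = u₁ x t)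
    (hper_p₁ : ∀ (x : V) (t : ℝ) (n : Fin 3 → ℤ), p₁ (x + fun i => (n i : ℝ)) t = p₁ x t)
    (hper_u₂ : ∀ (x₁ x₂ : V) (t : ℝ) (n m : Fin 3 → ℤ),
      u₂ (x₁ + fun i => (n i : ℝ)) (x₂ + fun i => (m i : ℝ)) t = u₂ x₁ x₂ t)
    (hper_p₂ : ∀ (x₁ x₂ : V) (t : ℝ) (n m : Fin 3 → ℤ),
      p₂ (x₁ + fun i => (n i : ℝ)) (x₂ + fun i => (m i : ℝ)) t = p₂ x₁ x₂ t)
    (hdiv₁ : ∀ (x : V) (t : ℝ), ∑ j, pd j (fun y => u₁ y t j) x = 0)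
    (hdiv₂ : ∀ (x₁ x₂ : V) (t : ℝ), ∑ j, pd j (fun y => u₂ x₁ y t j) x₂ = 0)
    (hPDE₁ : ∀ (x : V) (t : ℝ) (i : Fin 3),
      deriv (fun s => u₁ x s i) t + (∑ j, u₁ x t j * pd j (fun y => u₁ y t i) x)
      = - pd i (fun y => p₁ y t) x)
    (hPDE₂ : ∀ (x₁ x₂ : V) (t : ℝ) (i : Fin 3),
      deriv (fun s => u₂ x₁ x₂ s i) t
        + (∑ j, u₁ x₁ t j * pd j (fun y => u₂ y x₂ t i) x₁)
        + (∑ j, u₂ x₁ x₂ t j * pd j (fun y => u₂ x₁ y t i) x₂)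
      = - pd i (fun y => p₂ x₁ y t) x₂) :
    (∀ t : ℝ, deriv (fun s => ∫ x in cube, ∑ i, (u₁ x s i) ^ 2) t = 0)
    ∧ (∀ t : ℝ,
        deriv (fun s => ∫ x₁ in cube, ∫ x₂ in cube, ∑ i, (u₂ x₁ x₂ s i) ^ 2) t = 0) := by
  refine ⟨fun t => part1 u₁ p₁ hu₁ hp₁ hper_u₁ hper_p₁ hdiv₁ hPDE₁ t,
    fun t => part2 u₁ u₂ p₂ hu₁ hu₂ hp₂ hper_u₁ hper_u₂ hper_p₂ hdiv₁ hdiv₂ hPDE₂ t⟩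
end
end

section
/- Suppose m₂(x₁,x₂,t) is smooth and periodic, u₁(x₁,t) is smooth, periodic, divergence-free, u₂(x₁,x₂,t) is smooth, periodic, divergence-free in x₂, and m₂ satisfies (∂_t + u₁·∇₁)m₂ - u₂ × curl₂ m₂ = -∇₂p₂. Define the fluctuation helicity density H(x₁,t) = ∫ m₂ · curl₂ m₂ dx₂. Then H satisfies the transport equation (∂_t + u₁·∇₁)H = 0. -/
open MeasureTheory Pointwise

noncomputable section

def cross (a b : V) : V := fun i => a (i + 1) * b (i + 2) - a (i + 2) * b (i + 1)

def curl (f : V → V) (x : V) : V :=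
  fun i => pd (i + 1) (fun y => f y (i + 2)) x - pd (i + 2) (fun y => f y (i + 1)) x

namespace Helic

lemma cube_volume : volume cube = 1 := by
  rw [cube, Real.volume_Icc_pi]
  simp

lemma fd_eq : ZSpan.fundamentalDomain (Pi.basisFun ℝ (Fin 3))
    = Set.pi Set.univ (fun _ : Fin 3 => Set.Ico (0:ℝ) 1) := by
  ext x
  simp [ZSpan.fundamentalDomain, Set.mem_pi]

lemma fd_volume : volume (ZSpan.fundamentalDomain (Pi.basisFun ℝ (Fin 3))) = 1 := by
  rw [fd_eq, volume_pi_pi]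
  simp

lemma fd_subset_cube : ZSpan.fundamentalDomain (Pi.basisFun ℝ (Fin 3)) ⊆ cube := by
  rw [fd_eq, cube, ← Set.pi_univ_Icc]
  exact Set.pi_mono fun i _ => Set.Ico_subset_Icc_self

lemma fd_ae_cube : ZSpan.fundamentalDomain (Pi.basisFun ℝ (Fin 3)) =ᵐ[volume] cube := by
  refine ae_eq_of_subset_of_measure_ge fd_subset_cube ?_ ?_ ?_
  · rw [cube_volume, fd_volume]
  · exact (ZSpan.fundamentalDomain_measurableSet _).nullMeasurableSet
  · rw [cube_volume]; exact ENNReal.one_ne_top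

lemma integral_cube_add_translate (f : V → ℝ) (hf : Continuous f)
    (hper : ∀ (x : V) (n : Fin 3 → ℤ), f (x + fun i => (n i : ℝ)) = f x) (c : V) :
    ∫ x in cube, f (x + c) = ∫ x in cube, f x := by
  set b := Pi.basisFun ℝ (Fin 3)
  set D := ZSpan.fundamentalDomain b with hD
  have hfd : IsAddFundamentalDomain ↥(Submodule.span ℤ (Set.range ⇑b)) D volume :=
    ZSpan.isAddFundamentalDomain b volume
  have hinv : ∀ (g : ↥(Submodule.span ℤ (Set.range ⇑b))) (x : V), f (g +ᵥ x) = f x := by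
    intro g x
    have hg := (Module.Basis.mem_span_iff_repr_mem ℤ b g.1).1 g.2
    choose n hn using hg
    have : (g : V) = fun i => (n i : ℝ) := by
      funext i
      have := hn i
      simpa [b] using this.symm
    show f ((g : V) + x) = f x
    rw [this, add_comm]
    exact hper x n
  haveI : MeasurableVAdd ↥(Submodule.span ℤ (Set.range ⇑b)) V := by
    constructor
    · intro x
      show Measurable fun g : ↥(Submodule.span ℤ (Set.range ⇑b)) => (g : V) + x
      exact measurable_subtype_coe.add_const x
  haveI : VAddInvariantMeasure ↥(Submodule.span ℤ (Set.range ⇑b)) V volume := by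
    constructor
    intro g s hs
    show volume ((fun x : V => (g : V) + x) ⁻¹' s) = volume s
    exact measure_preimage_add volume _ s
  haveI : VAddCommClass V ↥(Submodule.span ℤ (Set.range ⇑b)) V :=
    ⟨fun a g x => by
      show a + ((g : V) + x) = (g : V) + (a + x)
      ring⟩
  have htr : IsAddFundamentalDomain ↥(Submodule.span ℤ (Set.range ⇑b)) (c +ᵥ D) volume :=
    hfd.vadd_of_comm c
  have h1 : ∫ x in cube, f (x + c) = ∫ x in D, f (x + c) :=
    setIntegral_congr_set fd_ae_cube.symm
  have h2 : ∫ x in D, f (x + c) = ∫ x in (c +ᵥ D), f x := by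
    have hmp : MeasurePreserving (fun x : V => x + c) volume volume :=
      measurePreserving_add_right volume c
    have hemb : MeasurableEmbedding (fun x : V => x + c) :=
      (MeasurableEquiv.addRight c).measurableEmbedding
    have hpre : (fun x : V => x + c) ⁻¹' (c +ᵥ D) = D := by
      ext x
      rw [Set.mem_preimage, Set.mem_vadd_set]
      constructor
      · rintro ⟨y, hy, h⟩
        have hyx : y = x := by
          have h' : c + y = c + x := by rw [vadd_eq_add] at h; rw [h, add_comm]
          exact add_left_cancel h'
        rwa [hyx] at hy
      · intro hx
        exact ⟨x, hx, by rw [vadd_eq_add, add_comm]⟩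
    have h2' := hmp.setIntegral_preimage_emb hemb f (c +ᵥ D)
    rwa [hpre] at h2'
  have h3 : ∫ x in (c +ᵥ D), f x = ∫ x in D, f x := htr.setIntegral_eq hfd hinv
  have h4 : ∫ x in D, f x = ∫ x in cube, f x := setIntegral_congr_set fd_ae_cube
  rw [h1, h2, h3, h4]

lemma cube_compact : IsCompact cube := isCompact_Icc

lemma integrableOn_cube {E : Type*} [NormedAddCommGroup E] {g : V → E} (hg : Continuous g) :
    IntegrableOn g cube := hg.continuousOn.integrableOn_compact cube_compact

/-- Differentiation under the integral sign over the cube. -/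
lemma hasFDerivAt_intCube {E : Type*} [NormedAddCommGroup E] [NormedSpace ℝ E]
    [FiniteDimensional ℝ E] (K : E × V → ℝ) (hK : ContDiff ℝ (⊤ : ℕ∞) K) (p : E) :
    HasFDerivAt (fun q => ∫ x in cube, K (q, x))
      (∫ x in cube, (fderiv ℝ K (p, x)).comp (ContinuousLinearMap.inl ℝ E V)) p := by
  have hKc : Continuous K := hK.continuous
  have hKd : Differentiable ℝ K := hK.differentiable (by simp)
  have hK' : Continuous (fderiv ℝ K) := (hK.fderiv_right (m := (⊤ : ℕ∞)) (by simp)).continuous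
  obtain ⟨C, hC⟩ := ((isCompact_closedBall p 1).prod cube_compact).exists_bound_of_continuousOn
      hK'.continuousOn
  have key : ∀ (q : E) (x : V), HasFDerivAt (fun q' => K (q', x))
      ((fderiv ℝ K (q, x)).comp (ContinuousLinearMap.inl ℝ E V)) q := by
    intro q x
    have h1 : HasFDerivAt (fun q' : E => ((q', x) : E × V))
        (ContinuousLinearMap.inl ℝ E V) q :=
      (hasFDerivAt_id q).prodMk (hasFDerivAt_const x q)
    exact ((hKd (q, x)).hasFDerivAt).comp q h1
  have hbnd : ∀ (q : E) (x : V), q ∈ Metric.closedBall p 1 → x ∈ cube →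
      ‖(fderiv ℝ K (q, x)).comp (ContinuousLinearMap.inl ℝ E V)‖ ≤ C := by
    intro q x hq hx
    have h0 : ‖fderiv ℝ K (q, x)‖ ≤ C := hC (q, x) ⟨hq, hx⟩
    refine le_trans (ContinuousLinearMap.opNorm_le_bound _
      (le_trans (norm_nonneg _) h0) ?_) ?_
    · intro v
      calc ‖(fderiv ℝ K (q, x)) (v, 0)‖ ≤ ‖fderiv ℝ K (q, x)‖ * ‖((v, (0:V)) : E × V)‖ :=
            (fderiv ℝ K (q, x)).le_opNorm _
        _ ≤ ‖fderiv ℝ K (q, x)‖ * ‖v‖ := by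
            apply mul_le_mul_of_nonneg_left _ (norm_nonneg _)
            rw [Prod.norm_def]
            simp [norm_nonneg]
        _ ≤ C * ‖v‖ := mul_le_mul_of_nonneg_right h0 (norm_nonneg _)
    · exact le_refl C
  refine hasFDerivAt_integral_of_dominated_of_fderiv_le (𝕜 := ℝ) (s := Metric.ball p 1) (bound := fun _ => C)
      (F := fun q x => K (q, x))
      (F' := fun q (x : V) => (fderiv ℝ K (q, x)).comp (ContinuousLinearMap.inl ℝ _ V))
      (Metric.ball_mem_nhds p one_pos) ?_ ?_ ?_ ?_ ?_ ?_
  · filter_upwards with q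
    exact (hKc.comp (continuous_const.prodMk continuous_id)).aestronglyMeasurable
  · exact integrableOn_cube (hKc.comp (continuous_const.prodMk continuous_id))
  · exact ((hK'.comp (continuous_const.prodMk continuous_id)).clm_comp
      continuous_const).aestronglyMeasurable
  · refine (ae_restrict_mem measurableSet_Icc).mono ?_
    intro x hx q hq
    exact hbnd q x (Metric.ball_subset_closedBall hq) hx
  · exact integrableOn_cube continuous_const
  · filter_upwards with x q _
    exact key q x

lemma fderiv_intCube {E : Type*} [NormedAddCommGroup E] [NormedSpace ℝ E]
    [FiniteDimensional ℝ E] (K : E × V → ℝ) (hK : ContDiff ℝ (⊤ : ℕ∞) K) (p : E) (d : E) :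
    fderiv ℝ (fun q => ∫ x in cube, K (q, x)) p d
      = ∫ x in cube, fderiv ℝ K (p, x) (d, 0) := by
  rw [(hasFDerivAt_intCube K hK p).fderiv]
  rw [ContinuousLinearMap.integral_apply]
  · rfl
  · exact integrableOn_cube ((((hK.fderiv_right (m := (⊤ : ℕ∞)) (by simp)).continuous).comp
      (continuous_const.prodMk continuous_id)).clm_comp continuous_const)

/-- The integral over the period cube of a partial derivative of a smooth periodic
function vanishes. -/
lemma integral_pd_cube (f : V → ℝ) (hf : ContDiff ℝ (⊤ : ℕ∞) f)
    (hper : ∀ (x : V) (n : Fin 3 → ℤ), f (x + fun i => (n i : ℝ)) = f x) (i : Fin 3) :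
    ∫ x in cube, pd i f x = 0 := by
  set e : V := Pi.single i 1 with he
  set K : ℝ × V → ℝ := fun q => f (q.2 + q.1 • e) with hKdef
  have hK : ContDiff ℝ (⊤ : ℕ∞) K :=
    hf.comp (contDiff_snd.add (contDiff_fst.smul contDiff_const))
  have hconst : (fun a : ℝ => ∫ x in cube, K (a, x)) = fun _ => ∫ x in cube, f x := by
    funext a
    have := integral_cube_add_translate f hf.continuous hper (a • e)
    simpa [hKdef] using this
  have h0 : fderiv ℝ (fun a : ℝ => ∫ x in cube, K (a, x)) 0 1 = 0 := by
    rw [hconst]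
    simp
  rw [fderiv_intCube K hK 0 1] at h0
  rw [← h0]
  apply setIntegral_congr_fun measurableSet_Icc
  intro x _
  set L : ℝ × V →L[ℝ] V :=
    (ContinuousLinearMap.snd ℝ ℝ V) + (ContinuousLinearMap.fst ℝ ℝ V).smulRight e with hL
  have h1 : HasFDerivAt (fun q : ℝ × V => q.2 + q.1 • e) L (0, x) := L.hasFDerivAt
  have hout : HasFDerivAt f (fderiv ℝ f x) (((0:ℝ), x).2 + ((0:ℝ), x).1 • e) := by
    rw [show ((0:ℝ), x).2 + ((0:ℝ), x).1 • e = x by simp]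
    exact ((hf.differentiable (by simp)) x).hasFDerivAt
  have h2 : HasFDerivAt K ((fderiv ℝ f x).comp L) ((0:ℝ), x) := hout.comp ((0:ℝ), x) h1
  show pd i f x = fderiv ℝ K (0, x) (1, 0)
  rw [h2.fderiv, ContinuousLinearMap.comp_apply]
  simp [pd, hL, he]

lemma contDiff_dirderiv {E : Type*} [NormedAddCommGroup E] [NormedSpace ℝ E]
    (g : E → ℝ) (hg : ContDiff ℝ (⊤ : ℕ∞) g) (d : E) :
    ContDiff ℝ (⊤ : ℕ∞) (fun z => fderiv ℝ g z d) :=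
  (hg.fderiv_right (m := (⊤ : ℕ∞)) (by simp)).clm_apply contDiff_const

lemma clairaut {E : Type*} [NormedAddCommGroup E] [NormedSpace ℝ E]
    (g : E → ℝ) (hg : ContDiff ℝ (⊤ : ℕ∞) g) (w d₁ d₂ : E) :
    fderiv ℝ (fun z => fderiv ℝ g z d₁) w d₂
      = fderiv ℝ (fun z => fderiv ℝ g z d₂) w d₁ := by
  have hdg : Differentiable ℝ (fderiv ℝ g) :=
    (hg.fderiv_right (m := (⊤ : ℕ∞)) (by simp)).differentiable (by simp)
  have hexp : ∀ d e : E, fderiv ℝ (fun z => fderiv ℝ g z d) w e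
      = fderiv ℝ (fderiv ℝ g) w e d := by
    intro d e
    have h1 : HasFDerivAt (fun z => fderiv ℝ g z d)
        (((ContinuousLinearMap.apply ℝ ℝ d)).comp (fderiv ℝ (fderiv ℝ g) w)) w :=
      ((ContinuousLinearMap.apply ℝ ℝ d).hasFDerivAt).comp w (hdg w).hasFDerivAt
    rw [h1.fderiv]
    rfl
  rw [hexp, hexp]
  have hsymm : IsSymmSndFDerivAt ℝ g w :=
    (hg.contDiffAt).isSymmSndFDerivAt ((by rw [minSmoothness_of_isRCLikeNormedField]; exact (WithTop.coe_le_coe.mpr le_top : ((2 : ℕ∞) : WithTop ℕ∞) ≤ ((⊤ : ℕ∞) : WithTop ℕ∞))))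
  exact hsymm d₂ d₁

lemma pd_slice1 (A : V × V × ℝ → ℝ) (hA : Differentiable ℝ A) (f : V → ℝ) (x₂ : V) (t : ℝ)
    (hf : ∀ y, f y = A (y, x₂, t)) (j : Fin 3) (y₀ : V) :
    pd j f y₀ = fderiv ℝ A (y₀, x₂, t) (Pi.single j 1, 0, 0) := by
  have h1 : HasFDerivAt (fun y : V => ((y, x₂, t) : V × V × ℝ))
      ((ContinuousLinearMap.id ℝ V).prod 0) y₀ :=
    (hasFDerivAt_id y₀).prodMk (hasFDerivAt_const (x₂, t) y₀)
  have h2 : HasFDerivAt (fun y => A (y, x₂, t))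
      ((fderiv ℝ A (y₀, x₂, t)).comp ((ContinuousLinearMap.id ℝ V).prod 0)) y₀ :=
    (hA (y₀, x₂, t)).hasFDerivAt.comp y₀ h1
  rw [show f = fun y => A (y, x₂, t) from funext hf]
  show fderiv ℝ (fun y => A (y, x₂, t)) y₀ (Pi.single j 1) = _
  rw [h2.fderiv]
  rfl

lemma pd_slice2 (A : V × V × ℝ → ℝ) (hA : Differentiable ℝ A) (f : V → ℝ) (y : V) (t : ℝ)
    (hf : ∀ z, f z = A (y, z, t)) (j : Fin 3) (x₀ : V) :
    pd j f x₀ = fderiv ℝ A (y, x₀, t) (0, Pi.single j 1, 0) := by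
  have h1 : HasFDerivAt (fun z : V => ((y, z, t) : V × V × ℝ))
      ((0 : V →L[ℝ] V).prod ((ContinuousLinearMap.id ℝ V).prod 0)) x₀ :=
    (hasFDerivAt_const y x₀).prodMk ((hasFDerivAt_id x₀).prodMk (hasFDerivAt_const t x₀))
  have h2 : HasFDerivAt (fun z => A (y, z, t))
      ((fderiv ℝ A (y, x₀, t)).comp
        ((0 : V →L[ℝ] V).prod ((ContinuousLinearMap.id ℝ V).prod 0))) x₀ :=
    (hA (y, x₀, t)).hasFDerivAt.comp x₀ h1
  rw [show f = fun z => A (y, z, t) from funext hf]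
  show fderiv ℝ (fun z => A (y, z, t)) x₀ (Pi.single j 1) = _
  rw [h2.fderiv]
  rfl

lemma deriv_slice3 (A : V × V × ℝ → ℝ) (hA : Differentiable ℝ A) (f : ℝ → ℝ) (y x₂ : V)
    (hf : ∀ s, f s = A (y, x₂, s)) (t : ℝ) :
    deriv f t = fderiv ℝ A (y, x₂, t) (0, 0, 1) := by
  have h1 : HasFDerivAt (fun s : ℝ => ((y, x₂, s) : V × V × ℝ))
      ((0 : ℝ →L[ℝ] V).prod ((0 : ℝ →L[ℝ] V).prod (ContinuousLinearMap.id ℝ ℝ))) t :=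
    (hasFDerivAt_const y t).prodMk ((hasFDerivAt_const x₂ t).prodMk (hasFDerivAt_id t))
  have h2 : HasFDerivAt (fun s => A (y, x₂, s))
      ((fderiv ℝ A (y, x₂, t)).comp
        ((0 : ℝ →L[ℝ] V).prod ((0 : ℝ →L[ℝ] V).prod (ContinuousLinearMap.id ℝ ℝ)))) t :=
    (hA (y, x₂, t)).hasFDerivAt.comp t h1
  rw [show f = fun s => A (y, x₂, s) from funext hf]
  rw [h2.hasDerivAt.deriv]
  rfl

lemma pd_prodslice (Φ : V × ℝ → ℝ) {L : V × ℝ →L[ℝ] ℝ} {y₀ : V} {t : ℝ}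
    (hΦ : HasFDerivAt Φ L (y₀, t)) (f : V → ℝ) (hf : ∀ y, f y = Φ (y, t)) (j : Fin 3) :
    pd j f y₀ = L (Pi.single j 1, 0) := by
  have h1 : HasFDerivAt (fun y : V => ((y, t) : V × ℝ))
      ((ContinuousLinearMap.id ℝ V).prod 0) y₀ :=
    (hasFDerivAt_id y₀).prodMk (hasFDerivAt_const t y₀)
  have h2 : HasFDerivAt (fun y => Φ (y, t))
      (L.comp ((ContinuousLinearMap.id ℝ V).prod 0)) y₀ := hΦ.comp y₀ h1
  rw [show f = fun y => Φ (y, t) from funext hf]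
  show fderiv ℝ (fun y => Φ (y, t)) y₀ (Pi.single j 1) = _
  rw [h2.fderiv]
  rfl

lemma deriv_prodslice (Φ : V × ℝ → ℝ) {L : V × ℝ →L[ℝ] ℝ} {y : V} {t₀ : ℝ}
    (hΦ : HasFDerivAt Φ L (y, t₀)) (f : ℝ → ℝ) (hf : ∀ s, f s = Φ (y, s)) :
    deriv f t₀ = L (0, 1) := by
  have h1 : HasFDerivAt (fun s : ℝ => ((y, s) : V × ℝ))
      ((0 : ℝ →L[ℝ] V).prod (ContinuousLinearMap.id ℝ ℝ)) t₀ :=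
    (hasFDerivAt_const y t₀).prodMk (hasFDerivAt_id t₀)
  have h2 : HasFDerivAt (fun s => Φ (y, s))
      (L.comp ((0 : ℝ →L[ℝ] V).prod (ContinuousLinearMap.id ℝ ℝ))) t₀ := hΦ.comp t₀ h1
  rw [show f = fun s => Φ (y, s) from funext hf]
  rw [h2.hasDerivAt.deriv]
  rfl

lemma pd_mul (f g : V → ℝ) (x : V) (hf : DifferentiableAt ℝ f x) (hg : DifferentiableAt ℝ g x)
    (i : Fin 3) :
    pd i (fun y => f y * g y) x = pd i f x * g x + f x * pd i g x := by
  show fderiv ℝ (fun y => f y * g y) x (Pi.single i 1) = _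
  rw [fderiv_fun_mul hf hg]
  simp [pd, smul_eq_mul]
  ring

lemma pd_sub (f g : V → ℝ) (x : V) (hf : DifferentiableAt ℝ f x) (hg : DifferentiableAt ℝ g x)
    (i : Fin 3) :
    pd i (fun y => f y - g y) x = pd i f x - pd i g x := by
  show fderiv ℝ (fun y => f y - g y) x (Pi.single i 1) = _
  rw [fderiv_fun_sub hf hg]
  rfl

lemma pd_periodic (f : V → ℝ) (hf : Differentiable ℝ f)
    (hper : ∀ (x : V) (n : Fin 3 → ℤ), f (x + fun k => (n k : ℝ)) = f x) (i : Fin 3) :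
    ∀ (x : V) (n : Fin 3 → ℤ), pd i f (x + fun k => (n k : ℝ)) = pd i f x := by
  intro x n
  set c : V := fun k => (n k : ℝ) with hc
  have hcomp : (fun y => f (y + c)) = f := funext fun y => hper y n
  have h1 : HasFDerivAt (fun y : V => f (y + c))
      ((fderiv ℝ f (x + c)).comp (ContinuousLinearMap.id ℝ V)) x := by
    have := (hf (x + c)).hasFDerivAt.comp x ((hasFDerivAt_id x).add_const c)
    simpa [Function.comp_def] using this
  calc pd i f (x + c) = fderiv ℝ f (x + c) (Pi.single i 1) := rfl
    _ = ((fderiv ℝ f (x + c)).comp (ContinuousLinearMap.id ℝ V)) (Pi.single i 1) := rfl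
    _ = fderiv ℝ (fun y => f (y + c)) x (Pi.single i 1) := by rw [h1.fderiv]
    _ = fderiv ℝ f x (Pi.single i 1) := by rw [hcomp]
    _ = pd i f x := rfl

lemma contDiff_pd (f : V → ℝ) (hf : ContDiff ℝ (⊤ : ℕ∞) f) (j : Fin 3) :
    ContDiff ℝ (⊤ : ℕ∞) (fun y => pd j f y) := contDiff_dirderiv f hf (Pi.single j 1)

lemma pd_comm (f : V → ℝ) (hf : ContDiff ℝ (⊤ : ℕ∞) f) (i j : Fin 3) (x : V) :
    pd i (fun y => pd j f y) x = pd j (fun y => pd i f y) x := by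
  show fderiv ℝ (fun y => fderiv ℝ f y (Pi.single j 1)) x (Pi.single i 1) = _
  exact clairaut f hf x (Pi.single j 1) (Pi.single i 1)

lemma cross_dot (u ω : V) : ∑ i, cross u ω i * ω i = 0 := by
  simp only [cross, Fin.sum_univ_three]
  have e1 : (0:Fin 3)+1 = 1 := rfl
  have e2 : (0:Fin 3)+2 = 2 := rfl
  have e3 : (1:Fin 3)+1 = 2 := rfl
  have e4 : (1:Fin 3)+2 = 0 := rfl
  have e5 : (2:Fin 3)+1 = 0 := rfl
  have e6 : (2:Fin 3)+2 = 1 := rfl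
  rw [e1, e2, e3, e4, e5, e6]
  ring

lemma div_curl (m : V → V) (hm : ∀ i, ContDiff ℝ (⊤ : ℕ∞) (fun x => m x i)) (x : V) :
    ∑ i, pd i (fun y => curl m y i) x = 0 := by
  have hd : ∀ (j l : Fin 3) (y : V), DifferentiableAt ℝ (fun z => pd j (fun w => m w l) z) y :=
    fun j l y => ((contDiff_pd _ (hm l) j).differentiable (by simp)) y
  have hexp : ∀ i : Fin 3, pd i (fun y => curl m y i) x
      = pd i (fun y => pd (i+1) (fun z => m z (i+2)) y) x
        - pd i (fun y => pd (i+2) (fun z => m z (i+1)) y) x := by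
    intro i
    exact pd_sub _ _ x (hd (i+1) (i+2) x) (hd (i+2) (i+1) x) i
  rw [Fin.sum_univ_three, hexp 0, hexp 1, hexp 2]
  have e1 : (0:Fin 3)+1 = 1 := rfl
  have e2 : (0:Fin 3)+2 = 2 := rfl
  have e3 : (1:Fin 3)+1 = 2 := rfl
  have e4 : (1:Fin 3)+2 = 0 := rfl
  have e5 : (2:Fin 3)+1 = 0 := rfl
  have e6 : (2:Fin 3)+2 = 1 := rfl
  rw [e1, e2, e3, e4, e5, e6]
  rw [pd_comm (fun z => m z 2) (hm 2) 0 1 x, pd_comm (fun z => m z 1) (hm 1) 0 2 x,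
    pd_comm (fun z => m z 0) (hm 0) 1 2 x]
  ring

lemma ibp_pointwise (a b : V → V) (ha : ∀ i, ContDiff ℝ (⊤ : ℕ∞) (fun x => a x i))
    (hb : ∀ i, ContDiff ℝ (⊤ : ℕ∞) (fun x => b x i)) (x : V) :
    (∑ i, a x i * curl b x i) - (∑ i, b x i * curl a x i)
      = ∑ i, pd i (fun y => cross (b y) (a y) i) x := by
  have hda : ∀ (l : Fin 3) (y : V), DifferentiableAt ℝ (fun z => a z l) y :=
    fun l y => ((ha l).differentiable (by simp)) y
  have hdb : ∀ (l : Fin 3) (y : V), DifferentiableAt ℝ (fun z => b z l) y :=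
    fun l y => ((hb l).differentiable (by simp)) y
  have hexp : ∀ i : Fin 3, pd i (fun y => cross (b y) (a y) i) x
      = (pd i (fun z => b z (i+1)) x * a x (i+2) + b x (i+1) * pd i (fun z => a z (i+2)) x)
        - (pd i (fun z => b z (i+2)) x * a x (i+1)
            + b x (i+2) * pd i (fun z => a z (i+1)) x) := by
    intro i
    have h1 : pd i (fun y => b y (i+1) * a y (i+2) - b y (i+2) * a y (i+1)) x
        = pd i (fun y => b y (i+1) * a y (i+2)) x
          - pd i (fun y => b y (i+2) * a y (i+1)) x :=
      pd_sub _ _ x ((hdb _ x).mul (hda _ x)) ((hdb _ x).mul (hda _ x)) i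
    show pd i (fun y => b y (i+1) * a y (i+2) - b y (i+2) * a y (i+1)) x = _
    rw [h1, pd_mul _ _ x (hdb _ x) (hda _ x) i, pd_mul _ _ x (hdb _ x) (hda _ x) i]
  have hc : ∀ (f : V → V) (i : Fin 3), curl f x i
      = pd (i+1) (fun y => f y (i+2)) x - pd (i+2) (fun y => f y (i+1)) x := fun _ _ => rfl
  rw [Fin.sum_univ_three, Fin.sum_univ_three, Fin.sum_univ_three,
    hexp 0, hexp 1, hexp 2, hc b 0, hc b 1, hc b 2, hc a 0, hc a 1, hc a 2]
  have e1 : (0:Fin 3)+1 = 1 := rfl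
  have e2 : (0:Fin 3)+2 = 2 := rfl
  have e3 : (1:Fin 3)+1 = 2 := rfl
  have e4 : (1:Fin 3)+2 = 0 := rfl
  have e5 : (2:Fin 3)+1 = 0 := rfl
  have e6 : (2:Fin 3)+2 = 1 := rfl
  rw [e1, e2, e3, e4, e5, e6]
  ring

lemma contDiff_curl (m : V → V) (hm : ∀ i, ContDiff ℝ (⊤ : ℕ∞) (fun x => m x i)) (i : Fin 3) :
    ContDiff ℝ (⊤ : ℕ∞) (fun x => curl m x i) :=
  (contDiff_pd _ (hm (i+2)) (i+1)).sub (contDiff_pd _ (hm (i+1)) (i+2))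

lemma curl_periodic (m : V → V) (hm : ∀ i, ContDiff ℝ (⊤ : ℕ∞) (fun x => m x i))
    (hpm : ∀ (i : Fin 3) (x : V) (n : Fin 3 → ℤ), m (x + fun k => (n k : ℝ)) i = m x i)
    (i : Fin 3) (x : V) (n : Fin 3 → ℤ) :
    curl m (x + fun k => (n k : ℝ)) i = curl m x i := by
  show pd (i+1) (fun y => m y (i+2)) _ - pd (i+2) (fun y => m y (i+1)) _ = _
  rw [pd_periodic _ ((hm (i+2)).differentiable (by simp)) (fun x n => hpm (i+2) x n) (i+1) x n,
    pd_periodic _ ((hm (i+1)).differentiable (by simp)) (fun x n => hpm (i+1) x n) (i+2) x n]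
  rfl

/-- ∫ a · curl b = ∫ b · curl a for smooth periodic fields. -/
lemma ibp_integral (a b : V → V) (ha : ∀ i, ContDiff ℝ (⊤ : ℕ∞) (fun x => a x i))
    (hb : ∀ i, ContDiff ℝ (⊤ : ℕ∞) (fun x => b x i))
    (hpa : ∀ (i : Fin 3) (x : V) (n : Fin 3 → ℤ), a (x + fun k => (n k : ℝ)) i = a x i)
    (hpb : ∀ (i : Fin 3) (x : V) (n : Fin 3 → ℤ), b (x + fun k => (n k : ℝ)) i = b x i) :
    ∫ x in cube, ∑ i, a x i * curl b x i = ∫ x in cube, ∑ i, b x i * curl a x i := by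
  have hkey : ∀ x, (∑ i, a x i * curl b x i)
      = (∑ i, b x i * curl a x i) + ∑ i, pd i (fun y => cross (b y) (a y) i) x := by
    intro x
    have := ibp_pointwise a b ha hb x
    linarith
  have hcont1 : Continuous fun x => ∑ i, b x i * curl a x i := by
    apply continuous_finset_sum
    intro i _
    exact ((hb i).continuous).mul (contDiff_curl a ha i).continuous
  have hcont2 : Continuous fun x => ∑ i, pd i (fun y => cross (b y) (a y) i) x := by
    apply continuous_finset_sum
    intro i _
    refine (contDiff_pd _ ?_ i).continuous
    exact ((hb (i+1)).mul (ha (i+2))).sub ((hb (i+2)).mul (ha (i+1)))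
  calc ∫ x in cube, ∑ i, a x i * curl b x i
      = ∫ x in cube, ((∑ i, b x i * curl a x i)
          + ∑ i, pd i (fun y => cross (b y) (a y) i) x) := by
        apply setIntegral_congr_fun measurableSet_Icc
        intro x _
        exact hkey x
    _ = (∫ x in cube, ∑ i, b x i * curl a x i)
          + ∫ x in cube, ∑ i, pd i (fun y => cross (b y) (a y) i) x :=
        integral_add (integrableOn_cube hcont1) (integrableOn_cube hcont2)
    _ = ∫ x in cube, ∑ i, b x i * curl a x i := by
        have hz : ∫ x in cube, ∑ i, pd i (fun y => cross (b y) (a y) i) x = 0 := by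
          rw [integral_finset_sum]
          · apply Finset.sum_eq_zero
            intro i _
            apply integral_pd_cube
            · exact ((hb (i+1)).mul (ha (i+2))).sub ((hb (i+2)).mul (ha (i+1)))
            · intro x n
              show b _ (i+1) * a _ (i+2) - b _ (i+2) * a _ (i+1) = _
              rw [hpb (i+1) x n, hpa (i+2) x n, hpb (i+2) x n, hpa (i+1) x n]
              rfl
          · intro i _
            refine integrableOn_cube (contDiff_pd _ ?_ i).continuous
            exact ((hb (i+1)).mul (ha (i+2))).sub ((hb (i+2)).mul (ha (i+1)))
        rw [hz, add_zero]

/-- ∫ ∇p · curl m = 0 for smooth periodic p, m. -/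
lemma grad_dot_curl_integral (p : V → ℝ) (m : V → V) (hp : ContDiff ℝ (⊤ : ℕ∞) p)
    (hm : ∀ i, ContDiff ℝ (⊤ : ℕ∞) (fun x => m x i))
    (hpp : ∀ (x : V) (n : Fin 3 → ℤ), p (x + fun k => (n k : ℝ)) = p x)
    (hpm : ∀ (i : Fin 3) (x : V) (n : Fin 3 → ℤ), m (x + fun k => (n k : ℝ)) i = m x i) :
    ∫ x in cube, ∑ i, pd i p x * curl m x i = 0 := by
  have hkey : ∀ x, (∑ i, pd i p x * curl m x i)
      = ∑ i, pd i (fun y => p y * curl m y i) x := by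
    intro x
    have hexp : ∀ i : Fin 3, pd i (fun y => p y * curl m y i) x
        = pd i p x * curl m x i + p x * pd i (fun y => curl m y i) x := by
      intro i
      exact pd_mul p (fun y => curl m y i) x ((hp.differentiable (by simp)) x)
        (((contDiff_curl m hm i).differentiable (by simp)) x) i
    have hdc := div_curl m hm x
    rw [Fin.sum_univ_three, Fin.sum_univ_three, hexp 0, hexp 1, hexp 2]
    rw [Fin.sum_univ_three] at hdc
    linear_combination (-(p x)) * hdc
  calc ∫ x in cube, ∑ i, pd i p x * curl m x i
      = ∫ x in cube, ∑ i, pd i (fun y => p y * curl m y i) x := by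
        apply setIntegral_congr_fun measurableSet_Icc
        intro x _
        exact hkey x
    _ = 0 := by
        rw [integral_finset_sum]
        · apply Finset.sum_eq_zero
          intro i _
          apply integral_pd_cube
          · exact hp.mul (contDiff_curl m hm i)
          · intro x n
            show p _ * curl m _ i = _
            rw [hpp x n, curl_periodic m hm hpm i x n]
        · intro i _
          exact integrableOn_cube (contDiff_pd _ (hp.mul (contDiff_curl m hm i)) i).continuous

-- ==== joint-variable machinery ====
variable (m₂ : V → V → ℝ → V)

def NJ : V × V × ℝ → V := fun w => m₂ w.1 w.2.1 w.2.2

def omJ : V × V × ℝ → V := fun w i =>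
  fderiv ℝ (fun z => NJ m₂ z (i + 2)) w (0, Pi.single (i + 1) 1, 0)
    - fderiv ℝ (fun z => NJ m₂ z (i + 1)) w (0, Pi.single (i + 2) 1, 0)

def AJ : V × V × ℝ → ℝ := fun w => ∑ i, NJ m₂ w i * omJ m₂ w i

def KJ : (V × ℝ) × V → ℝ := fun q => AJ m₂ (q.1.1, q.2, q.1.2)

def RJ (v : V × V × ℝ) : V × V × ℝ → V := fun w i => fderiv ℝ (fun z => NJ m₂ z i) w v

lemma contDiff_NJ (hm₂ : ContDiff ℝ (⊤ : ℕ∞) (fun p : V × V × ℝ => m₂ p.1 p.2.1 p.2.2)) (i : Fin 3) : ContDiff ℝ (⊤ : ℕ∞) (fun w => NJ m₂ w i) := contDiff_pi.1 hm₂ i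

lemma contDiff_omJ (hm₂ : ContDiff ℝ (⊤ : ℕ∞) (fun p : V × V × ℝ => m₂ p.1 p.2.1 p.2.2)) (i : Fin 3) : ContDiff ℝ (⊤ : ℕ∞) (fun w => omJ m₂ w i) :=
  (contDiff_dirderiv _ (contDiff_NJ m₂ hm₂ (i+2)) _).sub
    (contDiff_dirderiv _ (contDiff_NJ m₂ hm₂ (i+1)) _)

lemma contDiff_AJ (hm₂ : ContDiff ℝ (⊤ : ℕ∞) (fun p : V × V × ℝ => m₂ p.1 p.2.1 p.2.2)) : ContDiff ℝ (⊤ : ℕ∞) (AJ m₂) := by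
  apply ContDiff.sum
  intro i _
  exact (contDiff_NJ m₂ hm₂ i).mul (contDiff_omJ m₂ hm₂ i)

lemma contDiff_KJ (hm₂ : ContDiff ℝ (⊤ : ℕ∞) (fun p : V × V × ℝ => m₂ p.1 p.2.1 p.2.2)) : ContDiff ℝ (⊤ : ℕ∞) (KJ m₂) :=
  (contDiff_AJ m₂ hm₂).comp
    ((contDiff_fst.fst).prodMk (contDiff_snd.prodMk (contDiff_fst.snd)))

lemma contDiff_RJ (hm₂ : ContDiff ℝ (⊤ : ℕ∞) (fun p : V × V × ℝ => m₂ p.1 p.2.1 p.2.2)) (v : V × V × ℝ) (i : Fin 3) : ContDiff ℝ (⊤ : ℕ∞) (fun w => RJ m₂ v w i) :=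
  contDiff_dirderiv _ (contDiff_NJ m₂ hm₂ i) v

lemma omJ_eq (hm₂ : ContDiff ℝ (⊤ : ℕ∞) (fun p : V × V × ℝ => m₂ p.1 p.2.1 p.2.2)) (y : V) (s : ℝ) (x : V) (i : Fin 3) :
    curl (fun z => m₂ y z s) x i = omJ m₂ (y, x, s) i := by
  show pd (i+1) (fun z => m₂ y z s (i+2)) x - pd (i+2) (fun z => m₂ y z s (i+1)) x = _
  rw [pd_slice2 (fun w => NJ m₂ w (i+2))
      ((contDiff_NJ m₂ hm₂ (i+2)).differentiable (by simp))
      (fun z => m₂ y z s (i+2)) y s (fun z => rfl) (i+1) x,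
    pd_slice2 (fun w => NJ m₂ w (i+1))
      ((contDiff_NJ m₂ hm₂ (i+1)).differentiable (by simp))
      (fun z => m₂ y z s (i+1)) y s (fun z => rfl) (i+2) x]
  rfl

lemma AJ_eq (hm₂ : ContDiff ℝ (⊤ : ℕ∞) (fun p : V × V × ℝ => m₂ p.1 p.2.1 p.2.2)) (y : V) (s : ℝ) (x : V) :
    (∑ i, m₂ y x s i * curl (fun z => m₂ y z s) x i) = AJ m₂ (y, x, s) := by
  refine Finset.sum_congr rfl fun i _ => ?_
  rw [omJ_eq m₂ hm₂ y s x i]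
  rfl

lemma fderiv_dot (F G : V × V × ℝ → Fin 3 → ℝ)
    (hF : ∀ i, ContDiff ℝ (⊤ : ℕ∞) (fun w => F w i)) (hG : ∀ i, ContDiff ℝ (⊤ : ℕ∞) (fun w => G w i))
    (w v : V × V × ℝ) :
    fderiv ℝ (fun z => ∑ i, F z i * G z i) w v
      = ∑ i, (fderiv ℝ (fun z => F z i) w v * G w i
          + F w i * fderiv ℝ (fun z => G z i) w v) := by
  rw [fderiv_fun_sum (u := Finset.univ) (A := fun i z => F z i * G z i)
    (fun i _ => (((hF i).differentiable (by simp)) w).mul (((hG i).differentiable (by simp)) w))]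
  rw [ContinuousLinearMap.sum_apply]
  refine Finset.sum_congr rfl fun i _ => ?_
  rw [fderiv_fun_mul (((hF i).differentiable (by simp)) w) (((hG i).differentiable (by simp)) w)]
  simp only [ContinuousLinearMap.add_apply, ContinuousLinearMap.smul_apply, smul_eq_mul]
  ring

lemma fderiv_omJ (hm₂ : ContDiff ℝ (⊤ : ℕ∞) (fun p : V × V × ℝ => m₂ p.1 p.2.1 p.2.2)) (w v : V × V × ℝ) (i : Fin 3) :
    fderiv ℝ (fun z => omJ m₂ z i) w v
      = fderiv ℝ (fun z => RJ m₂ v z (i+2)) w (0, Pi.single (i+1) 1, 0)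
        - fderiv ℝ (fun z => RJ m₂ v z (i+1)) w (0, Pi.single (i+2) 1, 0) := by
  have hd1 : DifferentiableAt ℝ
      (fun z => fderiv ℝ (fun z' => NJ m₂ z' (i+2)) z ((0 : V), Pi.single (i+1) 1, (0:ℝ))) w :=
    ((contDiff_dirderiv _ (contDiff_NJ m₂ hm₂ (i+2)) _).differentiable (by simp)) w
  have hd2 : DifferentiableAt ℝ
      (fun z => fderiv ℝ (fun z' => NJ m₂ z' (i+1)) z ((0 : V), Pi.single (i+2) 1, (0:ℝ))) w :=
    ((contDiff_dirderiv _ (contDiff_NJ m₂ hm₂ (i+1)) _).differentiable (by simp)) w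
  have h1 : fderiv ℝ (fun z => omJ m₂ z i) w
      = fderiv ℝ (fun z => fderiv ℝ (fun z' => NJ m₂ z' (i+2)) z ((0:V), Pi.single (i+1) 1, (0:ℝ))) w
        - fderiv ℝ (fun z => fderiv ℝ (fun z' => NJ m₂ z' (i+1)) z ((0:V), Pi.single (i+2) 1, (0:ℝ))) w := by
    exact fderiv_sub hd1 hd2
  rw [h1, ContinuousLinearMap.sub_apply]
  rw [clairaut _ (contDiff_NJ m₂ hm₂ (i+2)) w _ v, clairaut _ (contDiff_NJ m₂ hm₂ (i+1)) w _ v]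
  rfl


end Helic

namespace Part2
open Helic

lemma vdecomp_sum (c : Fin 3 → ℝ) :
    (∑ j, c j • ((Pi.single j 1 : V), (0:V), (0:ℝ))) = ((c : V), (0:V), (0:ℝ)) := by
  refine Prod.ext ?_ (Prod.ext ?_ ?_)
  · rw [Prod.fst_sum]
    simp only [Prod.smul_mk, Prod.fst]
    funext k
    rw [Finset.sum_apply]
    simp [Pi.single_apply]
  · rw [Prod.snd_sum, Prod.fst_sum]
    simp
  · rw [Prod.snd_sum, Prod.snd_sum]
    simp

lemma fderiv_apply_vdecomp (L : (V × V × ℝ) →L[ℝ] ℝ) (c : Fin 3 → ℝ) :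
    L ((c : V), (0:V), (1:ℝ))
      = L ((0:V), (0:V), (1:ℝ)) + ∑ j, c j * L ((Pi.single j 1 : V), (0:V), (0:ℝ)) := by
  have hv : ((c : V), (0:V), (1:ℝ))
      = ((0:V), (0:V), (1:ℝ)) + ∑ j, c j • ((Pi.single j 1 : V), (0:V), (0:ℝ)) := by
    rw [vdecomp_sum]
    refine Prod.ext ?_ (Prod.ext ?_ ?_) <;> simp
  rw [hv, map_add, map_sum]
  congr 1
  refine Finset.sum_congr rfl fun j _ => ?_
  rw [_root_.map_smul]
  simp [smul_eq_mul]

lemma fderiv_apply_vdecomp2 (L : (V × ℝ) →L[ℝ] ℝ) (c : Fin 3 → ℝ) :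
    L ((0:V), (1:ℝ)) + ∑ j, c j * L ((Pi.single j 1 : V), (0:ℝ)) = L ((c : V), (1:ℝ)) := by
  have hs : (∑ j, c j • ((Pi.single j 1 : V), (0:ℝ))) = ((c : V), (0:ℝ)) := by
    refine Prod.ext ?_ ?_
    · rw [Prod.fst_sum]
      simp only [Prod.smul_mk, Prod.fst]
      funext k
      rw [Finset.sum_apply]
      simp [Pi.single_apply]
    · rw [Prod.snd_sum]
      simp
  have hv : ((c : V), (1:ℝ)) = ((0:V), (1:ℝ)) + ∑ j, c j • ((Pi.single j 1 : V), (0:ℝ)) := by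
    rw [hs]
    refine Prod.ext ?_ ?_ <;> simp
  rw [hv, map_add, map_sum]
  congr 1
  refine Finset.sum_congr rfl fun j _ => ?_
  rw [_root_.map_smul]
  simp [smul_eq_mul]

variable (m₂ : V → V → ℝ → V)

lemma RJ_slice (u₁ : V → ℝ → V) (u₂ : V → V → ℝ → V) (p₂ : V → V → ℝ → ℝ)
    (hm₂ : ContDiff ℝ (⊤ : ℕ∞) (fun p : V × V × ℝ => m₂ p.1 p.2.1 p.2.2))
    (hPDE : ∀ (x₁ x₂ : V) (t : ℝ) (i : Fin 3),
      deriv (fun s => m₂ x₁ x₂ s i) t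
        + (∑ j, u₁ x₁ t j * pd j (fun y => m₂ y x₂ t i) x₁)
        - cross (u₂ x₁ x₂ t) (curl (fun y => m₂ x₁ y t) x₂) i
      = - pd i (fun y => p₂ x₁ y t) x₂)
    (x₁ : V) (t : ℝ) (z : V) (i : Fin 3) :
    RJ m₂ (u₁ x₁ t, 0, 1) (x₁, z, t) i
      = cross (u₂ x₁ z t) (curl (fun y => m₂ x₁ y t) z) i - pd i (fun y => p₂ x₁ y t) z := by
  have hNd : Differentiable ℝ (fun w => NJ m₂ w i) :=
    (contDiff_NJ m₂ hm₂ i).differentiable (by simp)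
  show fderiv ℝ (fun w => NJ m₂ w i) (x₁, z, t) (u₁ x₁ t, 0, 1) = _
  rw [fderiv_apply_vdecomp]
  have hD : fderiv ℝ (fun w => NJ m₂ w i) (x₁, z, t) ((0:V), (0:V), (1:ℝ))
      = deriv (fun s => m₂ x₁ z s i) t :=
    (deriv_slice3 (fun w => NJ m₂ w i) hNd (fun s => m₂ x₁ z s i) x₁ z (fun s => rfl) t).symm
  have hS : ∀ j, fderiv ℝ (fun w => NJ m₂ w i) (x₁, z, t) ((Pi.single j 1 : V), (0:V), (0:ℝ))
      = pd j (fun y => m₂ y z t i) x₁ := fun j =>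
    (pd_slice1 (fun w => NJ m₂ w i) hNd (fun y => m₂ y z t i) z t (fun y => rfl) j x₁).symm
  rw [hD]
  have hS' : (∑ j, u₁ x₁ t j * fderiv ℝ (fun w => NJ m₂ w i) (x₁, z, t)
      ((Pi.single j 1 : V), (0:V), (0:ℝ)))
      = ∑ j, u₁ x₁ t j * pd j (fun y => m₂ y z t i) x₁ :=
    Finset.sum_congr rfl fun j _ => by rw [hS j]
  rw [hS']
  have hp := hPDE x₁ z t i
  linarith

lemma fderiv_AJ_slice (u₁ : V → ℝ → V) (u₂ : V → V → ℝ → V) (p₂ : V → V → ℝ → ℝ)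
    (hm₂ : ContDiff ℝ (⊤ : ℕ∞) (fun p : V × V × ℝ => m₂ p.1 p.2.1 p.2.2))
    (hPDE : ∀ (x₁ x₂ : V) (t : ℝ) (i : Fin 3),
      deriv (fun s => m₂ x₁ x₂ s i) t
        + (∑ j, u₁ x₁ t j * pd j (fun y => m₂ y x₂ t i) x₁)
        - cross (u₂ x₁ x₂ t) (curl (fun y => m₂ x₁ y t) x₂) i
      = - pd i (fun y => p₂ x₁ y t) x₂)
    (x₁ : V) (t : ℝ) (x : V) :
    fderiv ℝ (AJ m₂) (x₁, x, t) (u₁ x₁ t, 0, 1)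
      = (∑ i, (cross (u₂ x₁ x t) (curl (fun z => m₂ x₁ z t) x) i
            - pd i (fun z => p₂ x₁ z t) x) * curl (fun z => m₂ x₁ z t) x i)
        + ∑ i, m₂ x₁ x t i
            * curl (fun z k => cross (u₂ x₁ z t) (curl (fun y => m₂ x₁ y t) z) k
                - pd k (fun y => p₂ x₁ y t) z) x i := by
  set v : V × V × ℝ := (u₁ x₁ t, 0, 1) with hvdef
  have hdot : fderiv ℝ (AJ m₂) (x₁, x, t) v
      = ∑ i, (fderiv ℝ (fun z => NJ m₂ z i) (x₁, x, t) v * omJ m₂ (x₁, x, t) i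
          + NJ m₂ (x₁, x, t) i * fderiv ℝ (fun z => omJ m₂ z i) (x₁, x, t) v) := by
    exact fderiv_dot (fun z i => NJ m₂ z i) (fun z i => omJ m₂ z i)
      (contDiff_NJ m₂ hm₂) (contDiff_omJ m₂ hm₂) (x₁, x, t) v
  rw [hdot, ← Finset.sum_add_distrib]
  refine Finset.sum_congr rfl fun i _ => ?_
  have h1 : fderiv ℝ (fun z => NJ m₂ z i) (x₁, x, t) v
      = cross (u₂ x₁ x t) (curl (fun z => m₂ x₁ z t) x) i - pd i (fun z => p₂ x₁ z t) x :=
    RJ_slice m₂ u₁ u₂ p₂ hm₂ hPDE x₁ t x i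
  have h2 : omJ m₂ (x₁, x, t) i = curl (fun z => m₂ x₁ z t) x i :=
    (omJ_eq m₂ hm₂ x₁ t x i).symm
  have h3 : fderiv ℝ (fun z => omJ m₂ z i) (x₁, x, t) v
      = curl (fun z k => cross (u₂ x₁ z t) (curl (fun y => m₂ x₁ y t) z) k
          - pd k (fun y => p₂ x₁ y t) z) x i := by
    rw [fderiv_omJ m₂ hm₂ (x₁, x, t) v i]
    have h4 : ∀ (k j : Fin 3),
        fderiv ℝ (fun z => RJ m₂ v z k) (x₁, x, t) ((0:V), Pi.single j 1, (0:ℝ))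
          = pd j (fun z => cross (u₂ x₁ z t) (curl (fun y => m₂ x₁ y t) z) k
              - pd k (fun y => p₂ x₁ y t) z) x := by
      intro k j
      exact (pd_slice2 (fun z => RJ m₂ v z k)
        ((contDiff_RJ m₂ hm₂ v k).differentiable (by simp))
        (fun z => cross (u₂ x₁ z t) (curl (fun y => m₂ x₁ y t) z) k
          - pd k (fun y => p₂ x₁ y t) z)
        x₁ t (fun z => (RJ_slice m₂ u₁ u₂ p₂ hm₂ hPDE x₁ t z k).symm) j x).symm
    rw [h4 (i+2) (i+1), h4 (i+1) (i+2)]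
    rfl
  rw [h1, h2, h3]
  rfl

lemma fderiv_KJ_apply (hm₂ : ContDiff ℝ (⊤ : ℕ∞) (fun p : V × V × ℝ => m₂ p.1 p.2.1 p.2.2))
    (y : V) (s : ℝ) (x : V) (c : V) (σ : ℝ) :
    fderiv ℝ (KJ m₂) ((y, s), x) (((c, σ) : V × ℝ), (0 : V))
      = fderiv ℝ (AJ m₂) (y, x, s) (c, 0, σ) := by
  have hψ : HasFDerivAt (fun z : (V × ℝ) × V => ((z.1.1, z.2, z.1.2) : V × V × ℝ))
      (((ContinuousLinearMap.fst ℝ V ℝ).comp (ContinuousLinearMap.fst ℝ (V × ℝ) V)).prod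
        ((ContinuousLinearMap.snd ℝ (V × ℝ) V).prod
          ((ContinuousLinearMap.snd ℝ V ℝ).comp (ContinuousLinearMap.fst ℝ (V × ℝ) V))))
      ((y, s), x) :=
    (hasFDerivAt_fst.comp ((y, s), x) hasFDerivAt_fst).prodMk
      (hasFDerivAt_snd.prodMk (hasFDerivAt_snd.comp ((y, s), x) hasFDerivAt_fst))
  have h2 : HasFDerivAt (KJ m₂)
      ((fderiv ℝ (AJ m₂) (y, x, s)).comp
        ((((ContinuousLinearMap.fst ℝ V ℝ).comp (ContinuousLinearMap.fst ℝ (V × ℝ) V)).prod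
          ((ContinuousLinearMap.snd ℝ (V × ℝ) V).prod
            ((ContinuousLinearMap.snd ℝ V ℝ).comp (ContinuousLinearMap.fst ℝ (V × ℝ) V))))))
      ((y, s), x) :=
    ((((contDiff_AJ m₂ hm₂).differentiable (by simp)) (y, x, s)).hasFDerivAt).comp ((y, s), x) hψ
  rw [h2.fderiv]
  rfl

lemma integral_slice_zero (u₁ : V → ℝ → V) (u₂ : V → V → ℝ → V) (p₂ : V → V → ℝ → ℝ)
    (hm₂ : ContDiff ℝ (⊤ : ℕ∞) (fun p : V × V × ℝ => m₂ p.1 p.2.1 p.2.2))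
    (hu₂ : ContDiff ℝ (⊤ : ℕ∞) (fun p : V × V × ℝ => u₂ p.1 p.2.1 p.2.2))
    (hp₂ : ContDiff ℝ (⊤ : ℕ∞) (fun p : V × V × ℝ => p₂ p.1 p.2.1 p.2.2))
    (hper_u₂ : ∀ (x₁ x₂ : V) (t : ℝ) (n m : Fin 3 → ℤ),
      u₂ (x₁ + fun i => (n i : ℝ)) (x₂ + fun i => (m i : ℝ)) t = u₂ x₁ x₂ t)
    (hper_m₂ : ∀ (x₁ x₂ : V) (t : ℝ) (n m : Fin 3 → ℤ),
      m₂ (x₁ + fun i => (n i : ℝ)) (x₂ + fun i => (m i : ℝ)) t = m₂ x₁ x₂ t)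
    (hper_p₂ : ∀ (x₁ x₂ : V) (t : ℝ) (n m : Fin 3 → ℤ),
      p₂ (x₁ + fun i => (n i : ℝ)) (x₂ + fun i => (m i : ℝ)) t = p₂ x₁ x₂ t)
    (hPDE : ∀ (x₁ x₂ : V) (t : ℝ) (i : Fin 3),
      deriv (fun s => m₂ x₁ x₂ s i) t
        + (∑ j, u₁ x₁ t j * pd j (fun y => m₂ y x₂ t i) x₁)
        - cross (u₂ x₁ x₂ t) (curl (fun y => m₂ x₁ y t) x₂) i
      = - pd i (fun y => p₂ x₁ y t) x₂)
    (x₁ : V) (t : ℝ) :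
    ∫ x in cube, fderiv ℝ (AJ m₂) (x₁, x, t) (u₁ x₁ t, 0, 1) = 0 := by
  have h0 : (x₁ + fun i : Fin 3 => (((0 : Fin 3 → ℤ) i : ℝ))) = x₁ := by
    funext k; simp
  have hincl : ContDiff ℝ (⊤ : ℕ∞) (fun z : V => ((x₁, z, t) : V × V × ℝ)) :=
    contDiff_const.prodMk (contDiff_id.prodMk contDiff_const)
  have hmf : ∀ i, ContDiff ℝ (⊤ : ℕ∞) (fun z : V => m₂ x₁ z t i) := by
    intro i; exact contDiff_pi.1 (hm₂.comp hincl) i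
  have hu₂s : ∀ i, ContDiff ℝ (⊤ : ℕ∞) (fun z : V => u₂ x₁ z t i) := by
    intro i; exact contDiff_pi.1 (hu₂.comp hincl) i
  have hpf : ContDiff ℝ (⊤ : ℕ∞) (fun z : V => p₂ x₁ z t) := by
    exact hp₂.comp hincl
  have hω : ∀ i, ContDiff ℝ (⊤ : ℕ∞) (fun z : V => curl (fun y => m₂ x₁ y t) z i) :=
    contDiff_curl (fun y => m₂ x₁ y t) hmf
  have hrf : ∀ i, ContDiff ℝ (⊤ : ℕ∞) (fun z : V =>
      cross (u₂ x₁ z t) (curl (fun y => m₂ x₁ y t) z) i - pd i (fun y => p₂ x₁ y t) z) := by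
    intro i
    exact (((hu₂s (i+1)).mul (hω (i+2))).sub ((hu₂s (i+2)).mul (hω (i+1)))).sub
      (contDiff_pd _ hpf i)
  have hm2per : ∀ (z : V) (n : Fin 3 → ℤ), m₂ x₁ (z + fun k => (n k : ℝ)) t = m₂ x₁ z t := by
    intro z n
    have := hper_m₂ x₁ z t 0 n
    rwa [h0] at this
  have hu2per : ∀ (z : V) (n : Fin 3 → ℤ), u₂ x₁ (z + fun k => (n k : ℝ)) t = u₂ x₁ z t := by
    intro z n
    have := hper_u₂ x₁ z t 0 n
    rwa [h0] at this
  have hp2per : ∀ (z : V) (n : Fin 3 → ℤ), p₂ x₁ (z + fun k => (n k : ℝ)) t = p₂ x₁ z t := by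
    intro z n
    have := hper_p₂ x₁ z t 0 n
    rwa [h0] at this
  have hmfper : ∀ (i : Fin 3) (z : V) (n : Fin 3 → ℤ),
      m₂ x₁ (z + fun k => (n k : ℝ)) t i = m₂ x₁ z t i :=
    fun i z n => congrFun (hm2per z n) i
  have hωper : ∀ (i : Fin 3) (z : V) (n : Fin 3 → ℤ),
      curl (fun y => m₂ x₁ y t) (z + fun k => (n k : ℝ)) i = curl (fun y => m₂ x₁ y t) z i :=
    fun i z n => curl_periodic (fun y => m₂ x₁ y t) hmf hmfper i z n
  have hrfper : ∀ (i : Fin 3) (z : V) (n : Fin 3 → ℤ),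
      (cross (u₂ x₁ (z + fun k => (n k : ℝ)) t)
          (curl (fun y => m₂ x₁ y t) (z + fun k => (n k : ℝ))) i
        - pd i (fun y => p₂ x₁ y t) (z + fun k => (n k : ℝ)))
      = cross (u₂ x₁ z t) (curl (fun y => m₂ x₁ y t) z) i - pd i (fun y => p₂ x₁ y t) z := by
    intro i z n
    have hcv : curl (fun y => m₂ x₁ y t) (z + fun k => (n k : ℝ))
        = curl (fun y => m₂ x₁ y t) z := funext fun k => hωper k z n
    rw [hu2per z n, hcv, pd_periodic (fun y => p₂ x₁ y t) (hpf.differentiable (by simp)) hp2per i z n]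
  have hcont1 : Continuous fun x => ∑ i,
      (cross (u₂ x₁ x t) (curl (fun z => m₂ x₁ z t) x) i - pd i (fun z => p₂ x₁ z t) x)
        * curl (fun z => m₂ x₁ z t) x i := by
    apply continuous_finset_sum
    intro i _
    exact ((hrf i).continuous).mul ((hω i).continuous)
  have hcont2 : Continuous fun x => ∑ i, m₂ x₁ x t i
      * curl (fun z k => cross (u₂ x₁ z t) (curl (fun y => m₂ x₁ y t) z) k
          - pd k (fun y => p₂ x₁ y t) z) x i := by
    apply continuous_finset_sum
    intro i _
    exact ((hmf i).continuous).mul (contDiff_curl _ hrf i).continuous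
  have hz : ∫ x in cube, ∑ i,
      (cross (u₂ x₁ x t) (curl (fun z => m₂ x₁ z t) x) i - pd i (fun z => p₂ x₁ z t) x)
        * curl (fun z => m₂ x₁ z t) x i = 0 := by
    have hpt : ∀ x, (∑ i,
        (cross (u₂ x₁ x t) (curl (fun z => m₂ x₁ z t) x) i - pd i (fun z => p₂ x₁ z t) x)
          * curl (fun z => m₂ x₁ z t) x i)
        = - ∑ i, pd i (fun z => p₂ x₁ z t) x * curl (fun z => m₂ x₁ z t) x i := by
      intro x
      have hcd := cross_dot (u₂ x₁ x t) (curl (fun z => m₂ x₁ z t) x)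
      simp only [Fin.sum_univ_three] at hcd ⊢
      linear_combination hcd
    calc ∫ x in cube, ∑ i,
        (cross (u₂ x₁ x t) (curl (fun z => m₂ x₁ z t) x) i - pd i (fun z => p₂ x₁ z t) x)
          * curl (fun z => m₂ x₁ z t) x i
        = ∫ x in cube, - ∑ i, pd i (fun z => p₂ x₁ z t) x * curl (fun z => m₂ x₁ z t) x i := by
          apply setIntegral_congr_fun measurableSet_Icc
          intro x _
          exact hpt x
      _ = - ∫ x in cube, ∑ i, pd i (fun z => p₂ x₁ z t) x * curl (fun z => m₂ x₁ z t) x i :=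
          integral_neg _
      _ = 0 := by
          rw [grad_dot_curl_integral (fun z => p₂ x₁ z t) (fun z => m₂ x₁ z t) hpf hmf
            hp2per hmfper, neg_zero]
  calc ∫ x in cube, fderiv ℝ (AJ m₂) (x₁, x, t) (u₁ x₁ t, 0, 1)
      = ∫ x in cube, ((∑ i,
          (cross (u₂ x₁ x t) (curl (fun z => m₂ x₁ z t) x) i - pd i (fun z => p₂ x₁ z t) x)
            * curl (fun z => m₂ x₁ z t) x i)
        + ∑ i, m₂ x₁ x t i
            * curl (fun z k => cross (u₂ x₁ z t) (curl (fun y => m₂ x₁ y t) z) k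
                - pd k (fun y => p₂ x₁ y t) z) x i) := by
        apply setIntegral_congr_fun measurableSet_Icc
        intro x _
        exact fderiv_AJ_slice m₂ u₁ u₂ p₂ hm₂ hPDE x₁ t x
    _ = (∫ x in cube, ∑ i,
          (cross (u₂ x₁ x t) (curl (fun z => m₂ x₁ z t) x) i - pd i (fun z => p₂ x₁ z t) x)
            * curl (fun z => m₂ x₁ z t) x i)
        + ∫ x in cube, ∑ i, m₂ x₁ x t i
            * curl (fun z k => cross (u₂ x₁ z t) (curl (fun y => m₂ x₁ y t) z) k
                - pd k (fun y => p₂ x₁ y t) z) x i :=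
        integral_add (integrableOn_cube hcont1) (integrableOn_cube hcont2)
    _ = 0 := by
        rw [ibp_integral (fun z => m₂ x₁ z t)
          (fun z k => cross (u₂ x₁ z t) (curl (fun y => m₂ x₁ y t) z) k
            - pd k (fun y => p₂ x₁ y t) z) hmf hrf hmfper hrfper]
        rw [hz]
        norm_num

end Part2


open Helic Part2

/-- The fluctuation helicity density H(x₁,t) = ∫ m₂ · curl₂ m₂ dx₂ is transported
by the mean flow: (∂ₜ + u₁·∇₁) H = 0. -/
theorem fluctuation_helicity_transport
    (u₁ : V → ℝ → V) (u₂ m₂ : V → V → ℝ → V) (p₂ : V → V → ℝ → ℝ)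
    (hu₁ : ContDiff ℝ (⊤ : ℕ∞) (fun p : V × ℝ => u₁ p.1 p.2))
    (hu₂ : ContDiff ℝ (⊤ : ℕ∞) (fun p : V × V × ℝ => u₂ p.1 p.2.1 p.2.2))
    (hm₂ : ContDiff ℝ (⊤ : ℕ∞) (fun p : V × V × ℝ => m₂ p.1 p.2.1 p.2.2))
    (hp₂ : ContDiff ℝ (⊤ : ℕ∞) (fun p : V × V × ℝ => p₂ p.1 p.2.1 p.2.2))
    (hper_u₁ : ∀ (x : V) (t : ℝ) (n : Fin 3 → ℤ), u₁ (x + fun i => (n i : ℝ)) t = u₁ x t)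
    (hper_u₂ : ∀ (x₁ x₂ : V) (t : ℝ) (n m : Fin 3 → ℤ),
      u₂ (x₁ + fun i => (n i : ℝ)) (x₂ + fun i => (m i : ℝ)) t = u₂ x₁ x₂ t)
    (hper_m₂ : ∀ (x₁ x₂ : V) (t : ℝ) (n m : Fin 3 → ℤ),
      m₂ (x₁ + fun i => (n i : ℝ)) (x₂ + fun i => (m i : ℝ)) t = m₂ x₁ x₂ t)
    (hper_p₂ : ∀ (x₁ x₂ : V) (t : ℝ) (n m : Fin 3 → ℤ),
      p₂ (x₁ + fun i => (n i : ℝ)) (x₂ + fun i => (m i : ℝ)) t = p₂ x₁ x₂ t)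
    (hdiv₁ : ∀ (x : V) (t : ℝ), ∑ j, pd j (fun y => u₁ y t j) x = 0)
    (hdiv₂ : ∀ (x₁ x₂ : V) (t : ℝ), ∑ j, pd j (fun y => u₂ x₁ y t j) x₂ = 0)
    (hPDE : ∀ (x₁ x₂ : V) (t : ℝ) (i : Fin 3),
      deriv (fun s => m₂ x₁ x₂ s i) t
        + (∑ j, u₁ x₁ t j * pd j (fun y => m₂ y x₂ t i) x₁)
        - cross (u₂ x₁ x₂ t) (curl (fun y => m₂ x₁ y t) x₂) i
      = - pd i (fun y => p₂ x₁ y t) x₂) :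
    ∀ (x₁ : V) (t : ℝ),
      deriv (fun s => ∫ x₂ in cube,
          ∑ i, m₂ x₁ x₂ s i * curl (fun y => m₂ x₁ y s) x₂ i) t
        + ∑ j, u₁ x₁ t j * pd j (fun y => ∫ x₂ in cube,
            ∑ i, m₂ y x₂ t i * curl (fun z => m₂ y z t) x₂ i) x₁ = 0 := by
  intro x₁ t
  have hK : ContDiff ℝ (⊤ : ℕ∞) (KJ m₂) := contDiff_KJ m₂ hm₂
  have hΦfd := hasFDerivAt_intCube (KJ m₂) hK (x₁, t)
  have hΦat : HasFDerivAt (fun q : V × ℝ => ∫ x in cube, KJ m₂ (q, x))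
      (fderiv ℝ (fun q : V × ℝ => ∫ x in cube, KJ m₂ (q, x)) (x₁, t)) (x₁, t) :=
    hΦfd.differentiableAt.hasFDerivAt
  have hint : ∀ (y : V) (s : ℝ),
      (∫ x₂ in cube, ∑ i, m₂ y x₂ s i * curl (fun z => m₂ y z s) x₂ i)
        = (fun q : V × ℝ => ∫ x in cube, KJ m₂ (q, x)) (y, s) := by
    intro y s
    apply setIntegral_congr_fun measurableSet_Icc
    intro x _
    exact AJ_eq m₂ hm₂ y s x
  have hderiv_eq : deriv (fun s => ∫ x₂ in cube,
      ∑ i, m₂ x₁ x₂ s i * curl (fun y => m₂ x₁ y s) x₂ i) t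
      = (fderiv ℝ (fun q : V × ℝ => ∫ x in cube, KJ m₂ (q, x)) (x₁, t)) (0, 1) :=
    deriv_prodslice _ hΦat _ (fun s => hint x₁ s)
  have hpd_eq : ∀ j, pd j (fun y => ∫ x₂ in cube,
      ∑ i, m₂ y x₂ t i * curl (fun z => m₂ y z t) x₂ i) x₁
      = (fderiv ℝ (fun q : V × ℝ => ∫ x in cube, KJ m₂ (q, x)) (x₁, t)) (Pi.single j 1, 0) :=
    fun j => pd_prodslice _ hΦat _ (fun y => hint y t) j
  rw [hderiv_eq]
  simp only [hpd_eq]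
  rw [fderiv_apply_vdecomp2 (fderiv ℝ (fun q : V × ℝ => ∫ x in cube, KJ m₂ (q, x)) (x₁, t))
    (u₁ x₁ t)]
  rw [fderiv_intCube (KJ m₂) hK (x₁, t) ((u₁ x₁ t, 1) : V × ℝ)]
  have hptw : ∀ x : V, fderiv ℝ (KJ m₂) ((x₁, t), x) (((u₁ x₁ t, 1) : V × ℝ), (0 : V))
      = fderiv ℝ (AJ m₂) (x₁, x, t) (u₁ x₁ t, 0, 1) := fun x =>
    fderiv_KJ_apply m₂ hm₂ x₁ t x (u₁ x₁ t) 1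
  calc ∫ x in cube, fderiv ℝ (KJ m₂) ((x₁, t), x) (((u₁ x₁ t, 1) : V × ℝ), (0 : V))
      = ∫ x in cube, fderiv ℝ (AJ m₂) (x₁, x, t) (u₁ x₁ t, 0, 1) := by
        apply setIntegral_congr_fun measurableSet_Icc
        intro x _
        exact hptw x
    _ = 0 := integral_slice_zero m₂ u₁ u₂ p₂ hm₂ hu₂ hp₂ hper_u₂ hper_m₂ hper_p₂ hPDE x₁ t
end
end

section
/- Let u, B, p be smooth time-dependent fields on ℝ³ with ∇·u = 0, DB/Dt = B·∇u, and Du/Dt = -B × curl B - ∇p (ideal incompressible MHD). Then the Ohkitani-type relation holds: D²B/Dt² = -B·∇( ∇(p + |B|²/2) - B·∇B ). -/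
noncomputable section

/-- Material derivative along the flow of `u`. -/
def Dt (u : V → ℝ → V) (g : V → ℝ → ℝ) (x : V) (t : ℝ) : ℝ :=
  deriv (fun s => g x s) t + ∑ j, u x t j * pd j (fun y => g y t) x

namespace OhkAux

abbrev E := V × ℝ

lemma vec_eq_sum (v : V) : v = ∑ j, v j • (Pi.single j (1:ℝ) : V) := by
  funext k
  simp [Finset.sum_apply, Pi.single_apply]

lemma pd_slice {F : E → ℝ} (hF : ContDiff ℝ (⊤ : ℕ∞) F) (t : ℝ) (x : V) (j : Fin 3) :
    pd j (fun y => F (y, t)) x = fderiv ℝ F (x, t) (Pi.single j 1, 0) := by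
  have h1 : HasFDerivAt (fun y : V => (y, t)) (ContinuousLinearMap.inl ℝ V ℝ) x :=
    hasFDerivAt_prodMk_left x t
  have h2 := ((hF.differentiable (by simp)) (x, t)).hasFDerivAt
  have h3 : HasFDerivAt (fun y : V => F (y, t))
      ((fderiv ℝ F (x, t)).comp (ContinuousLinearMap.inl ℝ V ℝ)) x := h2.comp x h1
  rw [pd, h3.fderiv]
  rfl

lemma deriv_slice {F : E → ℝ} (hF : ContDiff ℝ (⊤ : ℕ∞) F) (x : V) (t : ℝ) :
    deriv (fun s => F (x, s)) t = fderiv ℝ F (x, t) (0, 1) := by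
  have h1 : HasFDerivAt (fun s : ℝ => (x, s)) (ContinuousLinearMap.inr ℝ V ℝ) t :=
    hasFDerivAt_prodMk_right x t
  have h2 := ((hF.differentiable (by simp)) (x, t)).hasFDerivAt
  have h3 : HasFDerivAt (fun s : ℝ => F (x, s))
      ((fderiv ℝ F (x, t)).comp (ContinuousLinearMap.inr ℝ V ℝ)) t := h2.comp t h1
  rw [h3.hasDerivAt.deriv]
  rfl

lemma Dt_eq (u : V → ℝ → V) {F : E → ℝ} (hF : ContDiff ℝ (⊤ : ℕ∞) F) (x : V) (t : ℝ) :
    Dt u (fun y s => F (y, s)) x t = fderiv ℝ F (x, t) (u x t, 1) := by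
  have hw : ((u x t, 1) : E) = (0, 1) + ∑ j, u x t j • ((Pi.single j 1 : V), (0:ℝ)) := by
    ext k
    · simp [Prod.fst_sum, Finset.sum_apply, Pi.single_apply]
    · simp [Prod.snd_sum]
  rw [Dt, deriv_slice hF, hw, map_add, map_sum]
  congr 1
  refine Finset.sum_congr rfl fun j _ => ?_
  rw [map_smul, smul_eq_mul, pd_slice hF]

lemma cross_curl_id (b : V → V) (v : V) (y : V) (i : Fin 3) :
    cross v (curl b y) i
      = ∑ k, v k * pd i (fun z => b z k) y - ∑ k, v k * pd k (fun z => b z i) y := by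
  fin_cases i <;>
    simp [cross, curl, Fin.sum_univ_three, show (0:Fin 3)+1 = 1 from rfl,
      show (0:Fin 3)+2 = 2 from rfl, show (1:Fin 3)+1 = 2 from rfl,
      show (1:Fin 3)+2 = 0 from rfl, show (2:Fin 3)+1 = 0 from rfl,
      show (2:Fin 3)+2 = 1 from rfl] <;>
    ring

end OhkAux

/-- Ohkitani-type relation for ideal incompressible MHD:
D²B/Dt² = -B·∇( ∇(p + |B|²/2) - B·∇B ). -/
theorem ohkitani_relation_MHD
    (u B : V → ℝ → V) (p : V → ℝ → ℝ)
    (hu : ContDiff ℝ (⊤ : ℕ∞) (fun q : V × ℝ => u q.1 q.2))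
    (hB : ContDiff ℝ (⊤ : ℕ∞) (fun q : V × ℝ => B q.1 q.2))
    (hp : ContDiff ℝ (⊤ : ℕ∞) (fun q : V × ℝ => p q.1 q.2))
    (hdivu : ∀ (x : V) (t : ℝ), ∑ j, pd j (fun y => u y t j) x = 0)
    (hstretch : ∀ (x : V) (t : ℝ) (i : Fin 3),
      Dt u (fun y s => B y s i) x t = ∑ j, B x t j * pd j (fun y => u y t i) x)
    (hmot : ∀ (x : V) (t : ℝ) (i : Fin 3),
      Dt u (fun y s => u y s i) x t
        = - cross (B x t) (curl (fun y => B y t) x) i - pd i (fun y => p y t) x) :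
    ∀ (x : V) (t : ℝ) (i : Fin 3),
      Dt u (fun y s => Dt u (fun z r => B z r i) y s) x t
        = - ∑ j, B x t j * pd j (fun y =>
            pd i (fun z => p z t + (∑ k, (B z t k) ^ 2) / 2) y
              - ∑ k, B y t k * pd k (fun z => B z t i) y) x := by
  intro x t i
  classical
  have hUc : ∀ k, ContDiff ℝ (⊤ : ℕ∞) (fun q : OhkAux.E => u q.1 q.2 k) := fun k => contDiff_pi.1 hu k
  have hBc : ∀ k, ContDiff ℝ (⊤ : ℕ∞) (fun q : OhkAux.E => B q.1 q.2 k) := fun k => contDiff_pi.1 hB k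
  -- A : space-time derivative of the i-th velocity component
  set A : OhkAux.E → OhkAux.E →L[ℝ] ℝ :=
    fderiv ℝ (fun q : OhkAux.E => u q.1 q.2 i) with hA_def
  have hA : ContDiff ℝ (⊤ : ℕ∞) A := (hUc i).fderiv_right (by simp)
  set w : OhkAux.E := (u x t, 1) with hw_def
  set D2 : OhkAux.E →L[ℝ] OhkAux.E →L[ℝ] ℝ := fderiv ℝ A (x, t) with hD2_def
  have hsymm : ∀ v v' : OhkAux.E, D2 v v' = D2 v' v := by
    intro v v'
    exact second_derivative_symmetric
      (fun y => (((hUc i).differentiable (by simp)) y).hasFDerivAt)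
      (((hA.differentiable (by simp)) (x, t)).hasFDerivAt) v v'
  -- velocity gradient matrix : m k j = ∂_j u_k at (x,t)
  set m : Fin 3 → Fin 3 → ℝ := fun k j =>
    fderiv ℝ (fun q : OhkAux.E => u q.1 q.2 k) (x, t) ((Pi.single j 1 : V), (0:ℝ)) with hm_def
  have hAm : ∀ j, A (x, t) ((Pi.single j 1 : V), (0:ℝ)) = m i j := by
    intro j; simp only [hA_def, hm_def]
  -- the smooth representative of Dt B_i
  set G : OhkAux.E → ℝ :=
    fun q => ∑ j, B q.1 q.2 j * A q ((Pi.single j 1 : V), (0:ℝ)) with hG_def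
  have hAv : ∀ v : OhkAux.E, ContDiff ℝ (⊤ : ℕ∞) (fun q => A q v) := fun v =>
    (ContinuousLinearMap.apply ℝ ℝ v).contDiff.comp hA
  have hG : ContDiff ℝ (⊤ : ℕ∞) G := ContDiff.sum fun j _ => (hBc j).mul (hAv _)
  have hGeq : ∀ y s, Dt u (fun z r => B z r i) y s = G (y, s) := by
    intro y s
    rw [hstretch y s i]
    refine Finset.sum_congr rfl fun j _ => ?_
    have hps : pd j (fun z => u z s i) y
        = fderiv ℝ (fun q : OhkAux.E => u q.1 q.2 i) (y, s) ((Pi.single j 1 : V), (0:ℝ)) :=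
      OhkAux.pd_slice (hUc i) s y j
    rw [hps]
  have hstep1 : Dt u (fun y s => Dt u (fun z r => B z r i) y s) x t = fderiv ℝ G (x, t) w := by
    have hfun : (fun y s => Dt u (fun z r => B z r i) y s) = fun y s => G (y, s) := by
      funext y s; exact hGeq y s
    rw [hfun, OhkAux.Dt_eq u hG x t]
  -- differentiability facts
  have hdBfull : ∀ j, DifferentiableAt ℝ (fun q : OhkAux.E => B q.1 q.2 j) (x, t) :=
    fun j => ((hBc j).differentiable (by simp)) _
  have hdAv : ∀ v : OhkAux.E, DifferentiableAt ℝ (fun q => A q v) (x, t) :=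
    fun v => ((hAv v).differentiable (by simp)) _
  have hfAv : ∀ v v' : OhkAux.E, fderiv ℝ (fun q => A q v) (x, t) v' = D2 v' v := by
    intro v v'
    have h0 : HasFDerivAt (fun q => A q v)
        ((ContinuousLinearMap.apply ℝ ℝ v).comp D2) (x, t) :=
      (ContinuousLinearMap.apply ℝ ℝ v).hasFDerivAt.comp (x, t)
        (((hA.differentiable (by simp)) (x, t)).hasFDerivAt)
    rw [h0.fderiv]
    rfl
  -- expansion of the left-hand side
  have hBjw : ∀ j, fderiv ℝ (fun q : OhkAux.E => B q.1 q.2 j) (x, t) w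
      = ∑ k, B x t k * m j k := by
    intro j
    have h1 : Dt u (fun y s => B y s j) x t
        = fderiv ℝ (fun q : OhkAux.E => B q.1 q.2 j) (x, t) w :=
      OhkAux.Dt_eq u (hBc j) x t
    rw [← h1, hstretch x t j]
    refine Finset.sum_congr rfl fun k _ => ?_
    have hps : pd k (fun y => u y t j) x
        = fderiv ℝ (fun q : OhkAux.E => u q.1 q.2 j) (x, t) ((Pi.single k 1 : V), (0:ℝ)) :=
      OhkAux.pd_slice (hUc j) t x k
    rw [hps, hm_def]
  have hGexp : fderiv ℝ G (x, t) w
      = ∑ j, (B x t j * D2 w ((Pi.single j 1 : V), (0:ℝ))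
          + m i j * ∑ k, B x t k * m j k) := by
    have hsum : fderiv ℝ G (x, t)
        = ∑ j, fderiv ℝ (fun q : OhkAux.E =>
            B q.1 q.2 j * A q ((Pi.single j 1 : V), (0:ℝ))) (x, t) :=
      fderiv_fun_sum fun j _ => (hdBfull j).mul (hdAv _)
    rw [hsum, ContinuousLinearMap.sum_apply]
    refine Finset.sum_congr rfl fun j _ => ?_
    rw [fderiv_fun_mul (hdBfull j) (hdAv _)]
    simp only [ContinuousLinearMap.add_apply, ContinuousLinearMap.smul_apply, smul_eq_mul,
      hfAv, hAm, hBjw]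
  -- the pointwise identity for the right-hand side integrand
  have hpt : ∀ y : V,
      pd i (fun z => p z t + (∑ k, (B z t k) ^ 2) / 2) y
        - ∑ k, B y t k * pd k (fun z => B z t i) y
      = - Dt u (fun z r => u z r i) y t := by
    intro y
    rw [hmot y t i, OhkAux.cross_curl_id (fun z => B z t) (B y t) y i]
    have hdp : DifferentiableAt ℝ (fun z => p z t) y :=
      ((hp.comp (contDiff_id.prodMk contDiff_const)).differentiable (by simp)) y
    have hdBk : ∀ k, DifferentiableAt ℝ (fun z => B z t k) y := fun k =>
      (((hBc k).comp (contDiff_id.prodMk contDiff_const)).differentiable (by simp)) y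
    have hdS0 : DifferentiableAt ℝ (fun z : V => ∑ k, (B z t k) ^ 2) y :=
      DifferentiableAt.fun_sum fun k _ => (hdBk k).fun_pow 2
    have hfe : (fun z : V => (∑ k, (B z t k) ^ 2) / 2)
        = fun z => (2:ℝ)⁻¹ * ∑ k, (B z t k) ^ 2 := by
      funext z; ring
    have hdS : DifferentiableAt ℝ (fun z => (∑ k, (B z t k) ^ 2) / 2) y := by
      rw [hfe]; exact hdS0.const_mul _
    have hsplit : pd i (fun z => p z t + (∑ k, (B z t k) ^ 2) / 2) y
        = pd i (fun z => p z t) y + pd i (fun z => (∑ k, (B z t k) ^ 2) / 2) y := by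
      simp only [pd, fderiv_fun_add hdp hdS, ContinuousLinearMap.add_apply]
    have hS : pd i (fun z => (∑ k, (B z t k) ^ 2) / 2) y
        = ∑ k, B y t k * pd i (fun z => B z t k) y := by
      have h2 : fderiv ℝ (fun z => ∑ k, (B z t k) ^ 2) y
          = ∑ k, fderiv ℝ (fun z => (B z t k) ^ 2) y :=
        fderiv_fun_sum fun k _ => (hdBk k).fun_pow 2
      have h3 : ∀ k, fderiv ℝ (fun z => (B z t k) ^ 2) y
          = B y t k • fderiv ℝ (fun z => B z t k) y
            + B y t k • fderiv ℝ (fun z => B z t k) y := by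
        intro k
        have : (fun z => (B z t k) ^ 2) = fun z => (B z t k) * (B z t k) := by
          funext z; ring
        rw [this, fderiv_fun_mul (hdBk k) (hdBk k)]
      rw [hfe, pd, fderiv_const_mul hdS0, ContinuousLinearMap.smul_apply, smul_eq_mul, h2,
        ContinuousLinearMap.sum_apply, Finset.mul_sum]
      refine Finset.sum_congr rfl fun k _ => ?_
      rw [h3 k]
      simp only [ContinuousLinearMap.add_apply, ContinuousLinearMap.smul_apply, smul_eq_mul]
      rw [show fderiv ℝ (fun z => B z t k) y (Pi.single i 1) = pd i (fun z => B z t k) y from rfl]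
      ring
    rw [hsplit, hS]
    ring
  -- derivative of Dt u_i in direction j
  have hKey : ∀ j, pd j (fun y => Dt u (fun z r => u z r i) y t) x
      = D2 ((Pi.single j 1 : V), (0:ℝ)) w + ∑ k, m k j * m i k := by
    intro j
    have hfun2 : (fun y => Dt u (fun z r => u z r i) y t)
        = fun y => A (y, t) ((u y t, 1) : OhkAux.E) := by
      funext y
      exact OhkAux.Dt_eq u (hUc i) y t
    rw [hfun2, pd]
    have hcd : DifferentiableAt ℝ (fun y : V => A (y, t)) x :=
      ((hA.comp (contDiff_id.prodMk contDiff_const)).differentiable (by simp)) x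
    have hud : DifferentiableAt ℝ (fun y : V => u y t) x :=
      ((hu.comp (contDiff_id.prodMk contDiff_const)).differentiable (by simp)) x
    have hWd : DifferentiableAt ℝ (fun y : V => ((u y t, 1) : OhkAux.E)) x :=
      hud.prodMk (differentiableAt_const _)
    rw [fderiv_clm_apply hcd hWd]
    have hc2 : HasFDerivAt (fun y : V => A (y, t))
        (D2.comp (ContinuousLinearMap.inl ℝ V ℝ)) x :=
      (((hA.differentiable (by simp)) (x, t)).hasFDerivAt).comp x (hasFDerivAt_prodMk_left x t)
    have hW2 : HasFDerivAt (fun y : V => ((u y t, 1) : OhkAux.E))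
        ((fderiv ℝ (fun y : V => u y t) x).prod 0) x :=
      hud.hasFDerivAt.prodMk (hasFDerivAt_const 1 x)
    rw [hc2.fderiv, hW2.fderiv]
    have hvj : ∀ k, fderiv ℝ (fun y : V => u y t) x (Pi.single j 1) k = m k j := by
      intro k
      have hpi : fderiv ℝ (fun y : V => u y t) x
          = ContinuousLinearMap.pi (fun k => fderiv ℝ (fun y : V => u y t k) x) :=
        fderiv_pi fun k =>
          (((hUc k).comp (contDiff_id.prodMk contDiff_const)).differentiable (by simp)) x
      rw [hpi]
      have hps : pd j (fun y => u y t k) x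
          = fderiv ℝ (fun q : OhkAux.E => u q.1 q.2 k) (x, t) ((Pi.single j 1 : V), (0:ℝ)) :=
        OhkAux.pd_slice (hUc k) t x j
      rw [ContinuousLinearMap.pi_apply, show fderiv ℝ (fun y : V => u y t k) x (Pi.single j 1)
        = pd j (fun y => u y t k) x from rfl, hps, hm_def]
    have hterm2 : A (x, t) ((fderiv ℝ (fun y : V => u y t) x (Pi.single j 1) : V), (0:ℝ))
        = ∑ k, m k j * m i k := by
      have hdec : ((fderiv ℝ (fun y : V => u y t) x (Pi.single j 1) : V), (0:ℝ))
          = ∑ k, (fderiv ℝ (fun y : V => u y t) x (Pi.single j 1) k)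
              • (((Pi.single k 1 : V), (0:ℝ)) : OhkAux.E) := by
        ext l
        · simp [Prod.fst_sum, Finset.sum_apply, Pi.single_apply]
        · simp [Prod.snd_sum]
      rw [hdec, map_sum]
      refine Finset.sum_congr rfl fun k _ => ?_
      rw [map_smul, smul_eq_mul, hvj k, hAm k]
    calc ((A (x, t)).comp ((fderiv ℝ (fun y : V => u y t) x).prod 0)
          + (D2.comp (ContinuousLinearMap.inl ℝ V ℝ)).flip ((u x t, 1) : OhkAux.E))
            (Pi.single j 1)
        = A (x, t) ((fderiv ℝ (fun y : V => u y t) x (Pi.single j 1) : V), (0:ℝ))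
            + D2 ((Pi.single j 1 : V), (0:ℝ)) w := by
          simp [ContinuousLinearMap.add_apply, ContinuousLinearMap.comp_apply,
            ContinuousLinearMap.flip_apply, ContinuousLinearMap.prod_apply, hw_def]
      _ = D2 ((Pi.single j 1 : V), (0:ℝ)) w + ∑ k, m k j * m i k := by
          rw [hterm2]; ring
  -- turn the right-hand side into the same expression
  have hRHSj : ∀ j, pd j (fun y =>
        pd i (fun z => p z t + (∑ k, (B z t k) ^ 2) / 2) y
          - ∑ k, B y t k * pd k (fun z => B z t i) y) x
      = - (D2 ((Pi.single j 1 : V), (0:ℝ)) w + ∑ k, m k j * m i k) := by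
    intro j
    have hfun : (fun y =>
          pd i (fun z => p z t + (∑ k, (B z t k) ^ 2) / 2) y
            - ∑ k, B y t k * pd k (fun z => B z t i) y)
        = fun y => - Dt u (fun z r => u z r i) y t := funext hpt
    rw [hfun, pd, fderiv_fun_neg, ContinuousLinearMap.neg_apply]
    rw [show fderiv ℝ (fun y => Dt u (fun z r => u z r i) y t) x (Pi.single j 1)
      = pd j (fun y => Dt u (fun z r => u z r i) y t) x from rfl, hKey j]
  -- final assembly
  rw [hstep1, hGexp]
  have hR : - ∑ j, B x t j * pd j (fun y =>
        pd i (fun z => p z t + (∑ k, (B z t k) ^ 2) / 2) y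
          - ∑ k, B y t k * pd k (fun z => B z t i) y) x
      = ∑ j, B x t j * (D2 ((Pi.single j 1 : V), (0:ℝ)) w + ∑ k, m k j * m i k) := by
    rw [← Finset.sum_neg_distrib]
    refine Finset.sum_congr rfl fun j _ => ?_
    rw [hRHSj j]
    ring
  rw [hR]
  have hswap : ∑ j, m i j * (∑ k, B x t k * m j k)
      = ∑ j, B x t j * (∑ k, m k j * m i k) := by
    simp only [Finset.mul_sum]
    rw [Finset.sum_comm]
    exact Finset.sum_congr rfl fun j _ => Finset.sum_congr rfl fun k _ => by ring
  calc ∑ j, (B x t j * D2 w ((Pi.single j 1 : V), (0:ℝ)) + m i j * ∑ k, B x t k * m j k)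
      = ∑ j, (B x t j * D2 ((Pi.single j 1 : V), (0:ℝ)) w)
          + ∑ j, m i j * ∑ k, B x t k * m j k := by
        rw [Finset.sum_add_distrib]
        congr 1
        exact Finset.sum_congr rfl fun j _ => by rw [hsymm w _]
    _ = ∑ j, B x t j * (D2 ((Pi.single j 1 : V), (0:ℝ)) w + ∑ k, m k j * m i k) := by
        rw [hswap, ← Finset.sum_add_distrib]
        exact Finset.sum_congr rfl fun j _ => by ring
end
end
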